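/- arXiv:math/9910108 — 2 statements merged into one kernel-verified Lean document; each statement's English description precedes it below -/
import Mathlib

section
/- Let D be an open subset of ℝ² (or of S²) with nonempty interior, and let a ∈ ∂D. If D is locally arcwise connected at a — i.e., every neighbourhood U of a contains a neighbourhood V of a such that any two points of V ∩ D can be joined by a path in U ∩ D — then a is accessible from D. -/
open Metric Set

/-- The plane `ℝ²`. -/
abbrev Plane := EuclideanSpace ℝ (Fin 2)

/-- The 2-sphere, as the unit sphere in `ℝ³`. -/
abbrev Sph := Metric.sphere (0 : EuclideanSpace ℝ (Fin 3)) 1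

section ArcOn

variable {X : Type*} [TopologicalSpace X]

/-- An injective path from `p` to `q` parametrized on `[0, L]`, with image inside `S`. -/
structure ArcOn (f : ℝ → X) (L : ℝ) (p q : X) (S : Set X) : Prop where
  nonneg : 0 ≤ L
  cont : ContinuousOn f (Icc 0 L)
  inj : InjOn f (Icc 0 L)
  src : f 0 = p
  tgt : f L = q
  sub : f '' Icc 0 L ⊆ S

lemma ArcOn.mono {f : ℝ → X} {L : ℝ} {p q : X} {S S' : Set X} (h : ArcOn f L p q S)
    (hS : S ⊆ S') : ArcOn f L p q S' :=
  ⟨h.nonneg, h.cont, h.inj, h.src, h.tgt, h.sub.trans hS⟩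

lemma continuousOn_union_closed {f : ℝ → X} {s t : Set ℝ} (hs : IsClosed s) (ht : IsClosed t)
    (hfs : ContinuousOn f s) (hft : ContinuousOn f t) : ContinuousOn f (s ∪ t) := by
  intro x hx
  have h1 : ContinuousWithinAt f s x := by
    by_cases h : x ∈ s
    · exact hfs x h
    · exact continuousWithinAt_of_notMem_closure (by rwa [hs.closure_eq])
  have h2 : ContinuousWithinAt f t x := by
    by_cases h : x ∈ t
    · exact hft x h
    · exact continuousWithinAt_of_notMem_closure (by rwa [ht.closure_eq])
  exact h1.union h2

lemma ArcOn.concat {f g : ℝ → X} {L1 L2 : ℝ} {p x q : X} {S1 S2 : Set X}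
    (hf : ArcOn f L1 p x S1) (hg : ArcOn g L2 x q S2)
    (hmeet : f '' Icc 0 L1 ∩ g '' Icc 0 L2 ⊆ {x}) :
    ArcOn (fun t => if t ≤ L1 then f t else g (t - L1)) (L1 + L2) p q (S1 ∪ S2) := by
  have h1 : (0:ℝ) ≤ L1 := hf.nonneg
  have h2 : (0:ℝ) ≤ L2 := hg.nonneg
  set F : ℝ → X := fun t => if t ≤ L1 then f t else g (t - L1) with hF
  have hmem1 : ∀ t, 0 ≤ t → t ≤ L1 → t ∈ Icc 0 L1 := fun t h h' => ⟨h, h'⟩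
  have key : ∀ t1 ∈ Icc 0 (L1 + L2), ∀ t2 ∈ Icc 0 (L1 + L2),
      t1 ≤ L1 → ¬ t2 ≤ L1 → F t1 = F t2 → False := by
    intro t1 ht1 t2 ht2 hle hgt heq
    have hFt1 : F t1 = f t1 := if_pos hle
    have hFt2 : F t2 = g (t2 - L1) := if_neg hgt
    have ht1' : t1 ∈ Icc 0 L1 := ⟨ht1.1, hle⟩
    have ht2' : t2 - L1 ∈ Icc 0 L2 := ⟨by linarith [not_le.1 hgt], by linarith [ht2.2]⟩
    have hy : f t1 ∈ f '' Icc 0 L1 ∩ g '' Icc 0 L2 := by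
      refine ⟨⟨t1, ht1', rfl⟩, ⟨t2 - L1, ht2', ?_⟩⟩
      rw [← hFt2, ← heq, hFt1]
    have hx1 : f t1 = x := hmeet hy
    have ht1L : t1 = L1 := hf.inj ht1' (by constructor <;> linarith) (by rw [hx1, hf.tgt])
    have ht2L : t2 - L1 = 0 := by
      refine hg.inj ht2' (by constructor <;> linarith) ?_
      have : g (t2 - L1) = x := by rw [← hFt2, ← heq, hFt1, hx1]
      rw [this, hg.src]
    linarith [not_le.1 hgt]
  constructor
  · linarith
  · have e1 : EqOn F f (Icc 0 L1) := fun t ht => if_pos ht.2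
    have e2 : EqOn F (fun t => g (t - L1)) (Icc L1 (L1 + L2)) := by
      intro t ht
      by_cases h : t ≤ L1
      · have : t = L1 := le_antisymm h ht.1
        subst this
        simp only [F, if_pos le_rfl, sub_self, hf.tgt, ← hg.src]
      · exact if_neg h
    have c1 : ContinuousOn F (Icc 0 L1) := (hf.cont).congr e1
    have c2 : ContinuousOn F (Icc L1 (L1 + L2)) := by
      refine ContinuousOn.congr ?_ e2
      have : ContinuousOn (fun t : ℝ => g (t - L1)) (Icc L1 (L1 + L2)) := by
        apply hg.cont.comp (by fun_prop)
        intro t ht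
        simp only [mem_Icc]
        constructor <;> linarith [ht.1, ht.2]
      exact this
    have := continuousOn_union_closed isClosed_Icc isClosed_Icc c1 c2
    rwa [Icc_union_Icc_eq_Icc h1 (by linarith)] at this
  · intro t1 ht1 t2 ht2 heq
    simp only [hF] at heq
    by_cases ha : t1 ≤ L1 <;> by_cases hb : t2 ≤ L1
    · exact hf.inj ⟨ht1.1, ha⟩ ⟨ht2.1, hb⟩ (by rwa [if_pos ha, if_pos hb] at heq)
    · exact absurd heq (by intro h; exact key t1 ht1 t2 ht2 ha hb (by simpa [hF, ha, hb] using h))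
    · exact absurd heq (by intro h; exact key t2 ht2 t1 ht1 hb ha (by simp only [hF]; rw [← h]))
    · have hm1 : t1 - L1 ∈ Icc (0:ℝ) L2 := ⟨by linarith [not_le.1 ha], by linarith [ht1.2]⟩
      have hm2 : t2 - L1 ∈ Icc (0:ℝ) L2 := ⟨by linarith [not_le.1 hb], by linarith [ht2.2]⟩
      have := hg.inj hm1 hm2 (by rwa [if_neg ha, if_neg hb] at heq)
      linarith
  · show F 0 = p
    simp only [hF]
    rw [if_pos h1, hf.src]
  · show F (L1 + L2) = q
    by_cases h : L1 + L2 ≤ L1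
    · have hL2 : L2 = 0 := le_antisymm (by linarith) h2
      simp only [hF]
      rw [if_pos h]
      rw [← hg.tgt, hL2, add_zero, hf.tgt, hg.src]
    · simp only [hF]
      rw [if_neg h, add_sub_cancel_left, hg.tgt]
  · rintro y ⟨t, ht, rfl⟩
    by_cases h : t ≤ L1
    · exact Or.inl (hf.sub ⟨t, ⟨ht.1, h⟩, (if_pos h).symm⟩)
    · refine Or.inr (hg.sub ⟨t - L1, ⟨by linarith [not_le.1 h], by linarith [ht.2]⟩, ?_⟩)
      exact (if_neg h).symm

lemma ArcOn.restrict {f : ℝ → X} {L : ℝ} {p q : X} {S : Set X} (h : ArcOn f L p q S)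
    {u : ℝ} (hu : u ∈ Icc 0 L) : ArcOn f u p (f u) S := by
  have hsub : Icc (0:ℝ) u ⊆ Icc 0 L := Icc_subset_Icc le_rfl hu.2
  exact ⟨hu.1, h.cont.mono hsub, h.inj.mono hsub, h.src, rfl,
    (image_mono (f := f) hsub).trans h.sub⟩

lemma ArcOn.shift {f : ℝ → X} {L : ℝ} {p q : X} {S : Set X} (h : ArcOn f L p q S)
    {s : ℝ} (hs : s ∈ Icc 0 L) : ArcOn (fun t => f (s + t)) (L - s) (f s) q S := by
  have hmaps : ∀ t ∈ Icc (0:ℝ) (L - s), s + t ∈ Icc 0 L := by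
    intro t ht; exact ⟨by linarith [ht.1, hs.1], by linarith [ht.2]⟩
  constructor
  · linarith [hs.2]
  · exact h.cont.comp (by fun_prop) hmaps
  · intro t1 ht1 t2 ht2 heq
    have := h.inj (hmaps t1 ht1) (hmaps t2 ht2) heq
    linarith
  · simp
  · simp only [add_sub_cancel, h.tgt]
  · rintro y ⟨t, ht, rfl⟩
    exact h.sub ⟨s + t, hmaps t ht, rfl⟩

end ArcOn

section Chain

/-- The image of a polygonal chain with the given list of vertices. -/
def cimg : List Plane → Set Plane
  | [] => ∅
  | [v] => {v}
  | v :: w :: M => segment ℝ v w ∪ cimg (w :: M)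

@[simp] lemma cimg_nil : cimg [] = ∅ := rfl
@[simp] lemma cimg_single (v : Plane) : cimg [v] = {v} := rfl
@[simp] lemma cimg_cons_cons (v w : Plane) (M : List Plane) :
    cimg (v :: w :: M) = segment ℝ v w ∪ cimg (w :: M) := rfl

lemma isClosed_segment' (v w : Plane) : IsClosed (segment ℝ v w) := by
  rw [segment_eq_image' ℝ v w]
  exact (isCompact_Icc.image (by fun_prop)).isClosed

lemma cimg_closed : ∀ L : List Plane, IsClosed (cimg L) := by
  intro L
  induction L with
  | nil => simp
  | cons v M ih =>
    cases M with
    | nil => exact isClosed_singleton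
    | cons w M' => exact (isClosed_segment' v w).union ih

lemma cimg_head_mem (v : Plane) (M : List Plane) : v ∈ cimg (v :: M) := by
  cases M with
  | nil => exact rfl
  | cons w M' => exact Or.inl (left_mem_segment ℝ v w)

lemma cimg_decomp : ∀ (L : List Plane) (x : Plane), x ∈ cimg L →
    ∃ L' : List Plane, L'.length ≤ L.length ∧ L'.head? = some x ∧
      L'.getLast? = L.getLast? ∧ cimg L' ⊆ cimg L := by
  intro L
  induction L with
  | nil => simp
  | cons v M ih =>
    intro x hx
    cases M with
    | nil =>
      simp only [cimg_single, mem_singleton_iff] at hx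
      subst hx
      exact ⟨[x], le_rfl, rfl, rfl, subset_rfl⟩
    | cons w M' =>
      rcases hx with hx | hx
      · refine ⟨x :: w :: M', le_rfl, rfl, ?_, ?_⟩
        · simp [List.getLast?_cons_cons]
        · simp only [cimg_cons_cons]
          apply union_subset_union_left
          intro y hy
          exact (convex_segment v w).segment_subset hx (right_mem_segment ℝ v w) hy
      · obtain ⟨L', hlen, hhead, hlast, hsub⟩ := ih x hx
        exact ⟨L', hlen.trans (by simp), hhead,
          by rw [hlast, List.getLast?_cons_cons], hsub.trans subset_union_right⟩

lemma chain_arc_aux : ∀ (n : ℕ) (L : List Plane), L.length ≤ n → ∀ (v w : Plane),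
    L.head? = some v → L.getLast? = some w → v ≠ w →
    ∃ f len, ArcOn f len v w (cimg L) := by
  intro n
  induction n with
  | zero =>
    intro L hL v w hhead _ _
    cases L with
    | nil => simp at hhead
    | cons a M => simp at hL
  | succ n ih =>
    rintro (_ | ⟨v0, M⟩) hL v w hhead hlast hvw
    · simp at hhead
    · simp only [List.head?_cons, Option.some.injEq] at hhead
      subst hhead
      cases M with
      | nil =>
        simp only [List.getLast?_singleton, Option.some.injEq] at hlast
        exact absurd hlast hvw
      | cons v1 M' =>
        rw [List.getLast?_cons_cons] at hlast
        by_cases hv : v0 = v1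
        · obtain ⟨f, len, harc⟩ := ih (v1 :: M') (by simpa using hL) v1 w rfl hlast
            (hv ▸ hvw)
          refine ⟨f, len, ?_⟩
          rw [hv]
          exact harc.mono subset_union_right
        · -- first segment is nondegenerate
          have hd : v1 - v0 ≠ 0 := sub_ne_zero.2 (Ne.symm hv)
          set γ : ℝ → Plane := fun t => v0 + t • (v1 - v0) with hγ
          have hγc : Continuous γ := by fun_prop
          have hγseg : segment ℝ v0 v1 = γ '' Icc 0 1 := segment_eq_image' ℝ v0 v1
          set T : Set ℝ := Icc (0:ℝ) 1 ∩ γ ⁻¹' (cimg (v1 :: M')) with hT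
          have hTclosed : IsClosed T :=
            isClosed_Icc.inter ((cimg_closed _).preimage hγc)
          have h1T : (1:ℝ) ∈ T := by
            refine ⟨⟨zero_le_one, le_rfl⟩, ?_⟩
            simp only [mem_preimage, hγ]
            have : v0 + (1:ℝ) • (v1 - v0) = v1 := by
              rw [one_smul]; abel
            rw [this]
            exact cimg_head_mem v1 M'
          have hbdd : BddBelow T := ⟨0, fun t ht => ht.1.1⟩
          set tx : ℝ := sInf T with htxdef
          have htx : tx ∈ T := hTclosed.csInf_mem ⟨1, h1T⟩ hbdd
          have hmin : ∀ t ∈ T, tx ≤ t := fun t ht => csInf_le hbdd ht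
          set x : Plane := γ tx with hx
          have hxmem : x ∈ cimg (v1 :: M') := htx.2
          have htx01 : tx ∈ Icc (0:ℝ) 1 := htx.1
          have hinjγ : InjOn γ (Icc 0 tx) := by
            intro t1 _ t2 _ heq
            simp only [hγ, add_right_inj] at heq
            exact smul_left_injective ℝ hd heq
          have hγ0 : γ 0 = v0 := by simp [hγ]
          have hsubseg : γ '' Icc 0 tx ⊆ segment ℝ v0 v1 := by
            rw [hγseg]
            exact image_mono (Icc_subset_Icc le_rfl htx01.2)
          obtain ⟨L', hlen, hhead', hlast', hsub'⟩ := cimg_decomp (v1 :: M') x hxmem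
          rw [hlast] at hlast'
          by_cases hxw : x = w
          · -- the first segment already reaches w
            refine ⟨γ, tx, ?_, hγc.continuousOn, hinjγ, hγ0, ?_, hsubseg.trans subset_union_left⟩
            · exact htx01.1
            · rw [← hx, hxw]
          · obtain ⟨A, lenA, hA⟩ := ih L' (by simp only [List.length_cons] at hlen hL; omega) x w
              hhead' hlast' hxw
            by_cases htx0 : tx = 0
            · refine ⟨A, lenA, ?_⟩
              have hxv : x = v0 := by simp [hx, hγ, htx0]
              rw [← hxv]
              exact hA.mono (hsub'.trans subset_union_right)
            · have hfront : ArcOn γ tx v0 x (segment ℝ v0 v1) :=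
                ⟨htx01.1, hγc.continuousOn, hinjγ, hγ0, rfl, hsubseg⟩
              have hmeet : γ '' Icc 0 tx ∩ A '' Icc 0 lenA ⊆ {x} := by
                rintro y ⟨⟨t, ht, rfl⟩, hy2⟩
                have hmem : γ t ∈ cimg (v1 :: M') := hsub' (hA.sub hy2)
                have htT : t ∈ T := ⟨⟨ht.1, ht.2.trans htx01.2⟩, hmem⟩
                have : t = tx := le_antisymm ht.2 (hmin t htT)
                rw [this]
                rfl
              refine ⟨_, tx + lenA, (hfront.concat hA hmeet).mono ?_⟩
              simp only [cimg_cons_cons]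
              exact union_subset_union_right _ hsub'

lemma chain_arc (L : List Plane) (v w : Plane) (hhead : L.head? = some v)
    (hlast : L.getLast? = some w) (hvw : v ≠ w) :
    ∃ f len, ArcOn f len v w (cimg L) :=
  chain_arc_aux L.length L le_rfl v w hhead hlast hvw

end Chain

section PathToArc

lemma cimg_append_le : ∀ (L : List Plane) (z y : Plane), L.getLast? = some z →
    cimg (L ++ [y]) ⊆ cimg L ∪ segment ℝ z y := by
  intro L
  induction L with
  | nil => simp
  | cons v M ih =>
    intro z y hz
    cases M with
    | nil =>
      simp only [List.getLast?_singleton, Option.some.injEq] at hz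
      subst hz
      simp only [List.cons_append, List.nil_append, cimg_cons_cons, cimg_single]
      rintro u (hu | hu)
      · exact Or.inr hu
      · simp only [mem_singleton_iff] at hu
        subst hu
        exact Or.inr (right_mem_segment _ _ _)
    | cons w M' =>
      rw [List.getLast?_cons_cons] at hz
      have := ih z y hz
      simp only [List.cons_append, cimg_cons_cons] at *
      rintro u (hu | hu)
      · exact Or.inl (Or.inl hu)
      · rcases this hu with h | h
        · exact Or.inl (Or.inr h)
        · exact Or.inr h

lemma exists_chain_of_path {O : Set Plane} (hO : IsOpen O) {g : ℝ → Plane}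
    (hg : ContinuousOn g (Icc 0 1)) (him : g '' Icc 0 1 ⊆ O) :
    ∃ L : List Plane, L.head? = some (g 0) ∧ L.getLast? = some (g 1) ∧ cimg L ⊆ O := by
  have hK : IsCompact (g '' Icc 0 1) := isCompact_Icc.image_of_continuousOn hg
  obtain ⟨δ, hδ, hth⟩ := hK.exists_thickening_subset_open hO him
  obtain ⟨δ', hδ', hδ'uc⟩ := Metric.uniformContinuousOn_iff.1
    (isCompact_Icc.uniformContinuousOn_of_continuous hg) δ hδ
  obtain ⟨n, hn⟩ := exists_nat_gt (1/δ')
  have hn0 : 0 < (n:ℝ) := lt_trans (by positivity) hn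
  set w : ℕ → Plane := fun k => g (k / n) with hw
  have hmem : ∀ k : ℕ, k ≤ n → (k:ℝ)/n ∈ Icc (0:ℝ) 1 := by
    intro k hk
    constructor
    · positivity
    · rw [div_le_one hn0]
      exact_mod_cast hk
  have hstep : ∀ k : ℕ, k + 1 ≤ n → dist (w (k+1)) (w k) < δ := by
    intro k hk
    apply hδ'uc _ (hmem (k+1) hk) _ (hmem k (by omega))
    have : dist (((k:ℝ)+1)/n) ((k:ℝ)/n) = 1/n := by
      rw [Real.dist_eq, show ((k:ℝ)+1)/n - (k:ℝ)/n = 1/n by ring,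
        abs_of_nonneg (by positivity)]
    push_cast
    rw [this]
    rw [div_lt_iff₀ hn0]
    calc (1:ℝ) = δ' * (1/δ') := by field_simp
    _ < δ' * n := by
      apply mul_lt_mul_of_pos_left hn hδ'
  have main : ∀ k : ℕ, k ≤ n → ∃ L : List Plane, L.head? = some (g 0) ∧
      L.getLast? = some (w k) ∧ cimg L ⊆ O := by
    intro k
    induction k with
    | zero =>
      intro _
      refine ⟨[g 0], rfl, ?_, ?_⟩
      · simp only [List.getLast?_singleton, Option.some.injEq, hw]
        norm_num
      · simp only [cimg_single, singleton_subset_iff]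
        exact him ⟨0, ⟨le_rfl, zero_le_one⟩, rfl⟩
    | succ k ih =>
      intro hk
      obtain ⟨L, hhead, hlast, hsub⟩ := ih (by omega)
      refine ⟨L ++ [w (k+1)], ?_, ?_, ?_⟩
      · cases L with
        | nil => simp at hhead
        | cons a M => simpa using hhead
      · simp [List.getLast?_concat]
      · refine (cimg_append_le L (w k) (w (k+1)) hlast).trans ?_
        apply union_subset hsub
        have hball : segment ℝ (w k) (w (k+1)) ⊆ ball (w k) δ := by
          apply (convex_ball (w k) δ).segment_subset
          · exact mem_ball_self hδ
          · rw [mem_ball]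
            exact hstep k hk
        refine hball.trans ?_
        refine (Metric.ball_subset_thickening ?_ δ).trans hth
        exact ⟨(k:ℝ)/n, hmem k (by omega), rfl⟩
  obtain ⟨L, hhead, hlast, hsub⟩ := main n le_rfl
  refine ⟨L, hhead, ?_, hsub⟩
  rw [hlast, hw]
  simp only [Option.some.injEq]
  rw [div_self (ne_of_gt hn0)]

lemma exists_arcOn {O : Set Plane} (hO : IsOpen O) {p q : Plane} (hpq : p ≠ q) {g : ℝ → Plane}
    (hg : ContinuousOn g (Icc 0 1)) (h0 : g 0 = p) (h1 : g 1 = q)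
    (him : g '' Icc 0 1 ⊆ O) : ∃ f len, ArcOn f len p q O := by
  obtain ⟨L, hhead, hlast, hsub⟩ := exists_chain_of_path hO hg him
  rw [h0] at hhead
  rw [h1] at hlast
  obtain ⟨f, len, harc⟩ := chain_arc L p q hhead hlast hpq
  exact ⟨f, len, harc.mono hsub⟩

end PathToArc

section MainPlane

variable {D : Set Plane} {a : Plane}

/-- The state of the inductive construction: an arc in `D` parametrized on `[0, L]`,
stable up to parameter `u`, whose tail lies in `ball a R`, together with a neighbourhood
`V ⊆ ball a r` of `a` within which further joining is possible. -/
structure St (D : Set Plane) (a : Plane) : Type where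
  f : ℝ → Plane
  L : ℝ
  u : ℝ
  r : ℝ
  R : ℝ
  V : Set Plane
  hL : 0 ≤ L
  hu : u ≤ L
  rpos : 0 < r
  hrR : r ≤ R
  cont : ContinuousOn f (Icc 0 L)
  inj : InjOn f (Icc 0 L)
  img : f '' Icc 0 L ⊆ D
  hV : V ∈ nhds a
  hVb : V ⊆ ball a r
  hq : f L ∈ V ∩ D
  join : ∀ p ∈ V ∩ D, ∀ q' ∈ V ∩ D, ∃ g : ℝ → Plane, ContinuousOn g (Icc 0 1) ∧
    g 0 = p ∧ g 1 = q' ∧ g '' Icc 0 1 ⊆ ball a r ∩ D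
  far : ∀ t, 0 ≤ t → t ≤ u → f t ∉ ball a r
  tail : ∀ t, 0 ≤ t → t ≤ L → u < t → f t ∈ ball a R

variable (hD : IsOpen D) (haD : a ∉ D) (hacl : a ∈ closure D)
  (hlac : ∀ U ∈ nhds a, ∃ V ∈ nhds a, V ⊆ U ∧
      ∀ p ∈ V ∩ D, ∀ q ∈ V ∩ D, ∃ g : ℝ → Plane, ContinuousOn g (Icc 0 1) ∧
        g 0 = p ∧ g 1 = q ∧ g '' Icc 0 1 ⊆ U ∩ D)

include hacl hlac in
lemma St.init : ∃ s : St D a, s.u = -1 ∧ s.r = 1 ∧ s.R = 1 := by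
  obtain ⟨V, hV, hVsub, hjoin⟩ := hlac (ball a 1) (ball_mem_nhds a one_pos)
  obtain ⟨q0, hq0V, hq0D⟩ : (V ∩ D).Nonempty := mem_closure_iff_nhds.1 hacl V hV
  have hinj : InjOn (fun _ : ℝ => q0) (Icc 0 0) := by
    intro t1 ht1 t2 ht2 _
    have h1 : t1 = 0 := le_antisymm ht1.2 ht1.1
    have h2 : t2 = 0 := le_antisymm ht2.2 ht2.1
    rw [h1, h2]
  have himg : (fun _ : ℝ => q0) '' Icc 0 0 ⊆ D := by
    rintro y ⟨t, _, rfl⟩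
    exact hq0D
  have hjoin' : ∀ p ∈ V ∩ D, ∀ q' ∈ V ∩ D, ∃ g : ℝ → Plane, ContinuousOn g (Icc 0 1) ∧
      g 0 = p ∧ g 1 = q' ∧ g '' Icc 0 1 ⊆ ball a 1 ∩ D := by
    intro p hp q' hq'
    exact hjoin p hp q' hq'
  have hfar : ∀ t : ℝ, 0 ≤ t → t ≤ -1 → (fun _ : ℝ => q0) t ∉ ball a 1 := by
    intro t ht1 ht2
    linarith
  have htail : ∀ t : ℝ, 0 ≤ t → t ≤ 0 → -1 < t → (fun _ : ℝ => q0) t ∈ ball a 1 :=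
    fun t _ _ _ => hVsub hq0V
  exact ⟨{ f := fun _ => q0, L := 0, u := -1, r := 1, R := 1, V := V,
            hL := le_rfl, hu := by norm_num, rpos := one_pos, hrR := le_rfl,
            cont := continuousOn_const,
            inj := hinj, img := himg, hV := hV, hVb := hVsub, hq := ⟨hq0V, hq0D⟩,
            join := hjoin', far := hfar, tail := htail }, rfl, rfl, rfl⟩

include hD haD hacl hlac in
lemma St.step (s : St D a) :
    ∃ s' : St D a, s'.R = s.r ∧ 2 * s'.r ≤ s.r ∧ s.u < s'.u ∧ 0 ≤ s'.u ∧ s'.u ≤ s.L ∧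
      (∀ t, 0 ≤ t → t ≤ s'.u → s'.f t = s.f t) := by
  classical
  set K : Set Plane := s.f '' Icc 0 s.L with hK
  have hKcomp : IsCompact K := isCompact_Icc.image_of_continuousOn s.cont
  have hKne : K.Nonempty := ⟨s.f s.L, ⟨s.L, ⟨s.hL, le_rfl⟩, rfl⟩⟩
  have haK : a ∉ K := fun h => haD (s.img h)
  set d : ℝ := Metric.infDist a K with hd
  have hdpos : 0 < d := (hKcomp.isClosed.notMem_iff_infDist_pos hKne).1 haK
  have hdle : ∀ y ∈ K, d ≤ dist a y := fun y hy => Metric.infDist_le_dist_of_mem hy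
  set r' : ℝ := min (s.r/2) (d/2) with hr'def
  have hr' : 0 < r' := lt_min (by linarith [s.rpos]) (by linarith)
  have hU' : ball a r' ∩ interior s.V ∈ nhds a :=
    Filter.inter_mem (ball_mem_nhds a hr') (interior_mem_nhds.2 s.hV)
  obtain ⟨V', hV', hV'sub, hjoin'⟩ := hlac _ hU'
  obtain ⟨q', hq'V', hq'D⟩ : (V' ∩ D).Nonempty := mem_closure_iff_nhds.1 hacl V' hV'
  have hq'ball : q' ∈ ball a r' := (hV'sub hq'V').1
  have hq'notK : q' ∉ K := by
    intro h
    have h1 : d ≤ dist a q' := hdle q' h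
    have h2 : dist a q' < r' := by rw [dist_comm]; exact mem_ball.1 hq'ball
    have h3 : r' ≤ d/2 := min_le_right _ _
    linarith
  have hqmem : s.f s.L ∈ s.V ∩ D := s.hq
  have hq'mem : q' ∈ s.V ∩ D := ⟨interior_subset (hV'sub hq'V').2, hq'D⟩
  have hne : s.f s.L ≠ q' := by
    intro h
    exact hq'notK (h ▸ ⟨s.L, ⟨s.hL, le_rfl⟩, rfl⟩)
  obtain ⟨g, hgc, hg0, hg1, hgim⟩ := s.join _ hqmem _ hq'mem
  have hOopen : IsOpen (ball a s.r ∩ D) := isOpen_ball.inter hD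
  obtain ⟨A, lenA, hA⟩ := exists_arcOn hOopen hne hgc hg0 hg1 hgim
  set T : Set ℝ := Icc 0 lenA ∩ A ⁻¹' K with hT
  have hT0 : 0 ∈ T := ⟨⟨le_rfl, hA.nonneg⟩, by
    rw [mem_preimage, hA.src]; exact ⟨s.L, ⟨s.hL, le_rfl⟩, rfl⟩⟩
  have hTclosed : IsClosed T := by
    apply hA.cont.preimage_isClosed_of_isClosed isClosed_Icc hKcomp.isClosed
  have hTbdd : BddAbove T := ⟨lenA, fun t ht => ht.1.2⟩
  set sx : ℝ := sSup T with hsx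
  have hsxT : sx ∈ T := hTclosed.csSup_mem ⟨0, hT0⟩ hTbdd
  have hsxmax : ∀ t ∈ T, t ≤ sx := fun t ht => le_csSup hTbdd ht
  set x : Plane := A sx with hx
  have hxK : x ∈ K := hsxT.2
  obtain ⟨u', hu'mem, hu'x⟩ := id hxK
  have hsxlt : sx < lenA := by
    rcases lt_or_eq_of_le hsxT.1.2 with h | h
    · exact h
    · exfalso
      apply hq'notK
      rw [← hA.tgt, ← h]
      exact hxK
  have hxball : x ∈ ball a s.r := (hA.sub ⟨sx, hsxT.1, rfl⟩).1
  have hu'gt : s.u < u' := by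
    by_contra hle
    push_neg at hle
    exact s.far u' hu'mem.1 hle (hu'x ▸ hxball)
  -- build the new arc by truncating `s.f` at `x` and appending the tail of `A`
  have sArc : ArcOn s.f s.L (s.f 0) (s.f s.L) D := ⟨s.hL, s.cont, s.inj, rfl, rfl, s.img⟩
  have front : ArcOn s.f u' (s.f 0) x D := by
    have := sArc.restrict hu'mem
    rwa [hu'x] at this
  have back : ArcOn (fun t => A (sx + t)) (lenA - sx) x q' (ball a s.r ∩ D) := by
    have := hA.shift hsxT.1
    rwa [← hx] at this
  have hmeet : s.f '' Icc 0 u' ∩ (fun t => A (sx + t)) '' Icc 0 (lenA - sx) ⊆ {x} := by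
    rintro y ⟨hy1, ⟨t2, ht2, ht2eq⟩⟩
    have ht2eq' : A (sx + t2) = y := ht2eq
    have hyK : y ∈ K := by
      rcases hy1 with ⟨t1, ht1, heq⟩
      rw [← heq]
      exact ⟨t1, ⟨ht1.1, ht1.2.trans hu'mem.2⟩, rfl⟩
    have hmemT : sx + t2 ∈ T := ⟨⟨by linarith [ht2.1, hsxT.1.1], by linarith [ht2.2]⟩,
      by rw [mem_preimage, ht2eq']; exact hyK⟩
    have ht20 : t2 = 0 := by
      have := hsxmax _ hmemT
      linarith [ht2.1]
    rw [mem_singleton_iff, ← ht2eq', ht20, add_zero]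
  have Farc := front.concat back hmeet
  have himg : D ∪ (ball a s.r ∩ D) ⊆ D := union_subset subset_rfl inter_subset_right
  set F : ℝ → Plane := fun t => if t ≤ u' then s.f t else A (sx + (t - u')) with hF
  set L' : ℝ := u' + (lenA - sx) with hL'
  have hFeq : ∀ t, F t = if t ≤ u' then s.f t else A (sx + (t - u')) := fun _ => rfl
  have hend : F L' = q' := Farc.tgt
  have hq'new : F L' ∈ V' ∩ D := by
    rw [hend]
    exact ⟨hq'V', hq'D⟩
  have hjoinnew : ∀ p ∈ V' ∩ D, ∀ q'' ∈ V' ∩ D, ∃ g : ℝ → Plane,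
      ContinuousOn g (Icc 0 1) ∧ g 0 = p ∧ g 1 = q'' ∧ g '' Icc 0 1 ⊆ ball a r' ∩ D := by
    intro p hp q'' hq''
    obtain ⟨g', h1, h2, h3, h4⟩ := hjoin' p hp q'' hq''
    refine ⟨g', h1, h2, h3, h4.trans ?_⟩
    apply inter_subset_inter_left
    exact inter_subset_left
  have hfarnew : ∀ t, 0 ≤ t → t ≤ u' → F t ∉ ball a r' := by
    intro t ht1 ht2
    rw [hFeq, if_pos ht2]
    intro hball
    have hmemK : s.f t ∈ K := ⟨t, ⟨ht1, ht2.trans hu'mem.2⟩, rfl⟩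
    have h1 := hdle _ hmemK
    have h2 : dist (s.f t) a < r' := mem_ball.1 hball
    have h3 : r' ≤ d/2 := min_le_right _ _
    rw [dist_comm] at h2
    linarith
  have htailnew : ∀ t, 0 ≤ t → t ≤ L' → u' < t → F t ∈ ball a s.r := by
    intro t ht1 ht2 ht3
    rw [hFeq, if_neg (not_le.2 ht3)]
    have hmem : sx + (t - u') ∈ Icc 0 lenA :=
      ⟨by linarith [hsxT.1.1], by linarith⟩
    exact (hA.sub ⟨_, hmem, rfl⟩).1
  have hagree : ∀ t, 0 ≤ t → t ≤ u' → F t = s.f t := by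
    intro t _ ht2
    rw [hFeq, if_pos ht2]
  have hrr : 2 * r' ≤ s.r := by
    have := min_le_left (s.r/2) (d/2)
    rw [hr'def]
    linarith
  exact ⟨{ f := F, L := L', u := u', r := r', R := s.r, V := V',
            hL := Farc.nonneg, hu := by rw [hL']; linarith,
            rpos := hr', hrR := (min_le_left _ _).trans (by linarith [s.rpos]),
            cont := Farc.cont, inj := Farc.inj, img := Farc.sub.trans himg,
            hV := hV', hVb := fun y hy => (hV'sub hy).1,
            hq := hq'new, join := hjoinnew, far := hfarnew, tail := htailnew },
          rfl, hrr, hu'gt, hu'mem.1, hu'mem.2, hagree⟩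

end MainPlane

section Assemble

variable {D : Set Plane} {a : Plane}

lemma main_plane (hD : IsOpen D) (haD : a ∉ D) (hacl : a ∈ closure D)
    (hlac : ∀ U ∈ nhds a, ∃ V ∈ nhds a, V ⊆ U ∧
      ∀ p ∈ V ∩ D, ∀ q ∈ V ∩ D, ∃ g : ℝ → Plane, ContinuousOn g (Icc 0 1) ∧
        g 0 = p ∧ g 1 = q ∧ g '' Icc 0 1 ⊆ U ∩ D) :
    ∃ φ : ℝ → Plane, ContinuousOn φ (Icc 0 1) ∧ InjOn φ (Icc 0 1) ∧
      φ 1 = a ∧ φ '' Icc 0 1 ⊆ closure D ∧ φ '' Ico 0 1 ⊆ D := by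
  classical
  obtain ⟨s0, hs0u, hs0r, hs0R⟩ := St.init hacl hlac
  set Sq : ℕ → St D a := fun n =>
    Nat.rec (motive := fun _ => St D a) s0 (fun _ s => (St.step hD haD hacl hlac s).choose) n
    with hSqdef
  have hstep : ∀ n, (Sq (n+1)).R = (Sq n).r ∧ 2 * (Sq (n+1)).r ≤ (Sq n).r ∧
      (Sq n).u < (Sq (n+1)).u ∧ 0 ≤ (Sq (n+1)).u ∧ (Sq (n+1)).u ≤ (Sq n).L ∧
      (∀ t, 0 ≤ t → t ≤ (Sq (n+1)).u → (Sq (n+1)).f t = (Sq n).f t) :=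
    fun n => (St.step hD haD hacl hlac (Sq n)).choose_spec
  set w : ℕ → ℝ := fun n => (Sq n).u with hwdef
  have hwmono : StrictMono w := strictMono_nat_of_lt_succ fun n => (hstep n).2.2.1
  have hwm : Monotone w := hwmono.monotone
  have hw1 : 0 ≤ w 1 := (hstep 0).2.2.2.1
  have hrmono : ∀ n m, n ≤ m → (Sq m).r ≤ (Sq n).r := by
    intro n m hnm
    induction m, hnm using Nat.le_induction with
    | base => exact le_rfl
    | succ m hnm ih =>
      have h1 := (hstep m).2.1
      have h2 := (Sq (m+1)).rpos
      linarith
  have hrpow : ∀ n, (Sq n).r ≤ (1/2:ℝ)^n := by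
    intro n
    induction n with
    | zero => rw [pow_zero]; exact le_of_eq hs0r
    | succ n ih =>
      have h1 := (hstep n).2.1
      have h2 : ((1:ℝ)/2)^(n+1) = (1/2)^n * (1/2) := pow_succ _ _
      linarith
  have agree : ∀ n m, n ≤ m → ∀ t, 0 ≤ t → t ≤ w n → (Sq m).f t = (Sq n).f t := by
    intro n m hnm
    induction m, hnm using Nat.le_induction with
    | base => intro t _ _; rfl
    | succ m hnm ih =>
      intro t ht1 ht2
      have h1 : t ≤ w (m+1) := ht2.trans (hwm (Nat.le_succ_of_le hnm))
      rw [(hstep m).2.2.2.2.2 t ht1 h1]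
      exact ih t ht1 ht2
  have tailg : ∀ n m, n ≤ m → ∀ t, 0 ≤ t → t ≤ (Sq m).L → w n < t →
      (Sq m).f t ∈ ball a (Sq n).R := by
    intro n m hnm
    induction m, hnm using Nat.le_induction with
    | base => exact fun t h1 h2 h3 => (Sq n).tail t h1 h2 h3
    | succ m hnm ih =>
      intro t ht1 ht2 ht3
      by_cases hc : t ≤ w (m+1)
      · rw [(hstep m).2.2.2.2.2 t ht1 hc]
        exact ih t ht1 (hc.trans (hstep m).2.2.2.2.1) ht3
      · have hmem := (Sq (m+1)).tail t ht1 ht2 (not_le.1 hc)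
        rw [(hstep m).1] at hmem
        have hle : (Sq m).r ≤ (Sq n).R := (hrmono n m hnm).trans (Sq n).hrR
        exact mem_of_mem_of_subset hmem (ball_subset_ball hle)
  set ψ : ℝ → Plane := fun t =>
    if h : ∃ n, 0 ≤ t ∧ t ≤ w n then (Sq h.choose).f t else a with hψdef
  have hψ : ∀ n (t : ℝ), 0 ≤ t → t ≤ w n → ψ t = (Sq n).f t := by
    intro n t ht1 ht2
    have hex : ∃ m, 0 ≤ t ∧ t ≤ w m := ⟨n, ht1, ht2⟩
    rw [hψdef]
    simp only [dif_pos hex]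
    have hc := hex.choose_spec
    rcases le_total hex.choose n with h | h
    · exact (agree hex.choose n h t ht1 hc.2).symm
    · exact agree n hex.choose h t ht1 ht2
  have habs : ∀ g : ℝ → ℝ,
      (∀ t', 0 ≤ t' → t' < 1 → ContinuousOn g (Icc 0 t')) →
      StrictMonoOn g (Ico 0 1) →
      (∀ t, 0 ≤ t → t < 1 → 0 ≤ g t) →
      (∀ t, 0 ≤ t → t < 1 → ∃ n, g t ≤ w n) →
      (∀ n, ∃ θ, θ < 1 ∧ ∀ t, θ < t → t < 1 → w n < g t) →
      ∃ φ : ℝ → Plane, ContinuousOn φ (Icc 0 1) ∧ InjOn φ (Icc 0 1) ∧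
        φ 1 = a ∧ φ '' Icc 0 1 ⊆ closure D ∧ φ '' Ico 0 1 ⊆ D := by
    intro g hgc hgmono hgnn hgcov hgbig
    set φ : ℝ → Plane := fun t => if t < 1 then ψ (g t) else a with hφdef
    have hφ1 : φ 1 = a := by rw [hφdef]; simp
    have hφeval : ∀ t, 0 ≤ t → t < 1 → ∃ m, g t ≤ w m ∧ φ t = (Sq m).f (g t) ∧ φ t ∈ D := by
      intro t ht1 ht2
      obtain ⟨m, hm⟩ := hgcov t ht1 ht2
      have he : φ t = (Sq m).f (g t) := by
        rw [hφdef]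
        simp only [if_pos ht2]
        exact hψ m (g t) (hgnn t ht1 ht2) hm
      refine ⟨m, hm, he, ?_⟩
      rw [he]
      exact (Sq m).img ⟨g t, ⟨hgnn t ht1 ht2, hm.trans (Sq m).hu⟩, rfl⟩
    have hcont : ContinuousOn φ (Icc 0 1) := by
      intro t0 ht0
      rcases lt_or_eq_of_le ht0.2 with ht01 | ht01
      · set t' : ℝ := (t0 + 1) / 2 with ht'def
        have ht'1 : t' < 1 := by rw [ht'def]; linarith
        have ht'0 : 0 ≤ t' := by rw [ht'def]; linarith [ht0.1]
        have ht0t' : t0 < t' := by rw [ht'def]; linarith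
        obtain ⟨n, hn⟩ := hgcov t' ht'0 ht'1
        have hgle : ∀ t ∈ Icc (0:ℝ) t', g t ≤ w n := by
          intro t ht
          have htlt : t < 1 := lt_of_le_of_lt ht.2 ht'1
          rcases lt_or_eq_of_le ht.2 with h | h
          · exact le_trans (le_of_lt (hgmono ⟨ht.1, htlt⟩ ⟨ht'0, ht'1⟩ h)) hn
          · rw [h]; exact hn
        have heqon : EqOn φ (fun t => (Sq n).f (g t)) (Icc 0 t') := by
          intro t ht
          have htlt : t < 1 := lt_of_le_of_lt ht.2 ht'1
          rw [hφdef]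
          simp only [if_pos htlt]
          exact hψ n (g t) (hgnn t ht.1 htlt) (hgle t ht)
        have hcont' : ContinuousOn (fun t => (Sq n).f (g t)) (Icc 0 t') := by
          apply (Sq n).cont.comp (hgc t' ht'0 ht'1)
          intro t ht
          have htlt : t < 1 := lt_of_le_of_lt ht.2 ht'1
          exact ⟨hgnn t ht.1 htlt, (hgle t ht).trans (Sq n).hu⟩
        have hmem : Icc 0 t' ∈ nhdsWithin t0 (Icc 0 1) := by
          apply mem_nhdsWithin.2
          refine ⟨Iio t', isOpen_Iio, ht0t', ?_⟩
          rintro y ⟨hy1, hy2⟩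
          exact ⟨hy2.1, le_of_lt hy1⟩
        exact ((hcont'.congr heqon) t0 ⟨ht0.1, le_of_lt ht0t'⟩).mono_of_mem_nhdsWithin hmem
      · rw [ht01]
        rw [Metric.continuousWithinAt_iff]
        intro ε hε
        obtain ⟨n, hn⟩ := exists_pow_lt_of_lt_one hε (by norm_num : (1/2:ℝ) < 1)
        obtain ⟨θ0, hθ0, hθbig⟩ := hgbig (n+1)
        set θ : ℝ := max θ0 0 with hθdef
        have hθ1 : θ < 1 := by rw [hθdef]; simp [hθ0]
        refine ⟨1 - θ, by linarith, ?_⟩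
        intro t ht hdist
        rw [hφ1]
        have htθ : θ < t := by
          rw [Real.dist_eq] at hdist
          rcases abs_lt.1 hdist with ⟨h1, _⟩
          linarith [ht.2]
        have ht0' : 0 ≤ t := le_trans (le_max_right θ0 0) (le_of_lt htθ)
        rcases lt_or_eq_of_le ht.2 with htlt | hteq
        · obtain ⟨m, hm, he, _⟩ := hφeval t ht0' htlt
          have hbig : w (n+1) < g t := hθbig t (lt_of_le_of_lt (le_max_left θ0 0) htθ) htlt
          have hnm : n + 1 ≤ m := by
            by_contra hcon
            push_neg at hcon
            have : w m ≤ w (n+1) := hwm hcon.le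
            linarith
          have hball := tailg (n+1) m hnm (g t) (hgnn t ht0' htlt)
            (hm.trans (Sq m).hu) hbig
          rw [he]
          have h1 : dist ((Sq m).f (g t)) a < (Sq (n+1)).R := mem_ball.1 hball
          have h2 : (Sq (n+1)).R ≤ (1/2:ℝ)^n := by
            rw [(hstep n).1]
            exact hrpow n
          linarith
        · rw [hteq, hφ1]
          simpa using hε
    have hinjaux : ∀ t1 t2, t1 ∈ Icc (0:ℝ) 1 → t2 ∈ Icc (0:ℝ) 1 → t1 < t2 → φ t1 ≠ φ t2 := by
      intro t1 t2 h1 h2 hlt heq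
      have ht1lt : t1 < 1 := lt_of_lt_of_le hlt h2.2
      rcases lt_or_eq_of_le h2.2 with hc | hc
      · obtain ⟨m1, hm1, he1, _⟩ := hφeval t1 h1.1 ht1lt
        obtain ⟨m2, hm2, he2, _⟩ := hφeval t2 h2.1 hc
        have hg1 : g t1 ≤ w (max m1 m2) := hm1.trans (hwm (le_max_left _ _))
        have hg2 : g t2 ≤ w (max m1 m2) := hm2.trans (hwm (le_max_right _ _))
        have he1' : φ t1 = (Sq (max m1 m2)).f (g t1) := by
          rw [hφdef]; simp only [if_pos ht1lt]; exact hψ _ _ (hgnn t1 h1.1 ht1lt) hg1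
        have he2' : φ t2 = (Sq (max m1 m2)).f (g t2) := by
          rw [hφdef]; simp only [if_pos hc]; exact hψ _ _ (hgnn t2 h2.1 hc) hg2
        have heq' : g t1 = g t2 := by
          apply (Sq (max m1 m2)).inj
          · exact ⟨hgnn t1 h1.1 ht1lt, hg1.trans (Sq _).hu⟩
          · exact ⟨hgnn t2 h2.1 hc, hg2.trans (Sq _).hu⟩
          · rw [← he1', ← he2', heq]
        have hglt : g t1 < g t2 := hgmono ⟨h1.1, ht1lt⟩ ⟨h2.1, hc⟩ hlt
        linarith
      · obtain ⟨m1, hm1, he1, hD1⟩ := hφeval t1 h1.1 ht1lt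
        apply haD
        rw [← hφ1, ← hc, ← heq]
        exact hD1
    have hinj : InjOn φ (Icc 0 1) := by
      intro t1 h1 t2 h2 heq
      rcases lt_trichotomy t1 t2 with h | h | h
      · exact absurd heq (hinjaux t1 t2 h1 h2 h)
      · exact h
      · exact absurd heq.symm (hinjaux t2 t1 h2 h1 h)
    refine ⟨φ, hcont, hinj, hφ1, ?_, ?_⟩
    · rintro y ⟨t, ht, rfl⟩
      rcases lt_or_eq_of_le ht.2 with hc | hc
      · obtain ⟨m, _, _, hD'⟩ := hφeval t ht.1 hc
        exact subset_closure hD'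
      · rw [hc, hφ1]
        exact hacl
    · rintro y ⟨t, ht, rfl⟩
      obtain ⟨m, _, _, hD'⟩ := hφeval t ht.1 ht.2
      exact hD'
  by_cases hb : BddAbove (range w)
  · set S : ℝ := sSup (range w) with hS
    have hwle : ∀ n, w n ≤ S := fun n => le_csSup hb ⟨n, rfl⟩
    have hSpos : 0 < S :=
      lt_of_le_of_lt hw1 ((hwmono (by norm_num : (1:ℕ) < 2)).trans_le (hwle 2))
    have hwltS : ∀ n, w n < S := fun n =>
      lt_of_lt_of_le (hwmono (Nat.lt_succ_self n)) (hwle (n+1))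
    apply habs (fun t => S * t)
    · intro t' _ _
      fun_prop
    · intro t1 _ t2 _ h
      exact mul_lt_mul_of_pos_left h hSpos
    · intro t ht _
      positivity
    · intro t ht htl
      have hlt : S * t < S := by nlinarith
      obtain ⟨y, ⟨n, rfl⟩, hy⟩ := exists_lt_of_lt_csSup (Set.range_nonempty w) hlt
      exact ⟨n, le_of_lt hy⟩
    · intro n
      refine ⟨w n / S, by rw [div_lt_one hSpos]; exact hwltS n, ?_⟩
      intro t hθ _
      calc w n = S * (w n / S) := by field_simp
        _ < S * t := mul_lt_mul_of_pos_left hθ hSpos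
  · have hnb : ∀ s : ℝ, ∃ n, s < w n := by
      intro s
      rcases not_bddAbove_iff.1 hb s with ⟨y, ⟨n, rfl⟩, hy⟩
      exact ⟨n, hy⟩
    have hmono2 : StrictMonoOn (fun t : ℝ => t / (1 - t)) (Ico 0 1) := by
      intro t1 ht1 t2 ht2 h
      simp only
      rw [div_lt_div_iff₀ (by linarith [ht1.2]) (by linarith [ht2.2])]
      nlinarith [ht1.1, ht2.1]
    apply habs (fun t => t / (1 - t))
    · intro t' ht'0 ht'1
      apply ContinuousOn.div continuousOn_id (by fun_prop)
      intro t ht h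
      have h1 : t < 1 := lt_of_le_of_lt ht.2 ht'1
      have h2 : (0:ℝ) < 1 - t := by linarith
      rw [h] at h2
      exact lt_irrefl 0 h2
    · exact hmono2
    · intro t ht htl
      exact div_nonneg ht (by linarith)
    · intro t ht htl
      obtain ⟨n, hn⟩ := hnb (t / (1 - t))
      exact ⟨n, le_of_lt hn⟩
    · intro n
      set c : ℝ := max (w n) 0 with hc
      have hc0 : 0 ≤ c := le_max_right _ _
      have hc1 : (0:ℝ) < c + 1 := by linarith
      have hθmem : c / (c + 1) ∈ Ico (0:ℝ) 1 := by
        constructor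
        · exact div_nonneg hc0 (le_of_lt hc1)
        · rw [div_lt_one hc1]; linarith
      refine ⟨c / (c + 1), hθmem.2, ?_⟩
      intro t hθ ht1
      have hgc : c / (c + 1) / (1 - c / (c + 1)) = c := by
        have h2 : 1 - c / (c + 1) = 1 / (c + 1) := by field_simp; ring
        rw [h2, div_div_eq_mul_div, div_one, div_mul_cancel₀ _ (ne_of_gt hc1)]
      have hmem2 : t ∈ Ico (0:ℝ) 1 := ⟨le_trans hθmem.1 (le_of_lt hθ), ht1⟩
      have := hmono2 hθmem hmem2 hθ
      calc w n ≤ c := le_max_left _ _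
        _ = c / (c + 1) / (1 - c / (c + 1)) := hgc.symm
        _ < t / (1 - t) := this

end Assemble

section Transfer

lemma main_homeo {X : Type*} [TopologicalSpace X] (e : X ≃ₜ Plane) (D : Set X)
    (hDopen : IsOpen D) (a : X) (hacl : a ∈ closure D) (haD : a ∉ D)
    (hlac : ∀ U ∈ nhds a, ∃ V ∈ nhds a, V ⊆ U ∧
      ∀ p ∈ V ∩ D, ∀ q ∈ V ∩ D, ∃ g : ℝ → X, ContinuousOn g (Icc 0 1) ∧
        g 0 = p ∧ g 1 = q ∧ g '' Icc 0 1 ⊆ U ∩ D) :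
    ∃ φ : ℝ → X, ContinuousOn φ (Icc 0 1) ∧ InjOn φ (Icc 0 1) ∧
      φ 1 = a ∧ φ '' Icc 0 1 ⊆ closure D ∧ φ '' Ico 0 1 ⊆ D := by
  set D' : Set Plane := e.symm ⁻¹' D with hD'
  have hD'open : IsOpen D' := hDopen.preimage e.symm.continuous
  set a' : Plane := e a with ha'
  have hDim : e '' D = D' := e.toEquiv.image_eq_preimage_symm D
  have hacl' : a' ∈ closure D' := by
    rw [← hDim, ← e.image_closure]
    exact ⟨a, hacl, rfl⟩
  have haD' : a' ∉ D' := by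
    rw [hD', mem_preimage, ha', e.symm_apply_apply]
    exact haD
  have hlac' : ∀ U' ∈ nhds a', ∃ V' ∈ nhds a', V' ⊆ U' ∧
      ∀ p ∈ V' ∩ D', ∀ q ∈ V' ∩ D', ∃ g : ℝ → Plane, ContinuousOn g (Icc 0 1) ∧
        g 0 = p ∧ g 1 = q ∧ g '' Icc 0 1 ⊆ U' ∩ D' := by
    intro U' hU'
    have hU : e ⁻¹' U' ∈ nhds a := e.continuous.continuousAt.preimage_mem_nhds (by rwa [← ha'])
    obtain ⟨V, hV, hVsub, hjoin⟩ := hlac _ hU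
    refine ⟨e.symm ⁻¹' V, ?_, ?_, ?_⟩
    · apply e.symm.continuous.continuousAt.preimage_mem_nhds
      rwa [ha', e.symm_apply_apply]
    · intro y hy
      have h := hVsub hy
      rwa [mem_preimage, e.apply_symm_apply] at h
    · rintro p ⟨hpV, hpD⟩ q ⟨hqV, hqD⟩
      obtain ⟨g, hgc, hg0, hg1, hgim⟩ := hjoin (e.symm p) ⟨hpV, hpD⟩ (e.symm q) ⟨hqV, hqD⟩
      refine ⟨fun t => e (g t), e.continuous.comp_continuousOn hgc,
        by show e (g 0) = p; rw [hg0, e.apply_symm_apply],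
        by show e (g 1) = q; rw [hg1, e.apply_symm_apply], ?_⟩
      rintro y ⟨t, ht, rfl⟩
      have h := hgim ⟨t, ht, rfl⟩
      refine ⟨h.1, ?_⟩
      rw [hD', mem_preimage, e.symm_apply_apply]
      exact h.2
  obtain ⟨φ', h1, h2, h3, h4, h5⟩ := main_plane hD'open haD' hacl' hlac'
  refine ⟨fun t => e.symm (φ' t), e.symm.continuous.comp_continuousOn h1, ?_,
    by show e.symm (φ' 1) = a; rw [h3, ha', e.symm_apply_apply], ?_, ?_⟩
  · intro t1 ht1 t2 ht2 heq
    exact h2 ht1 ht2 (e.symm.injective heq)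
  · rintro y ⟨t, ht, rfl⟩
    have hmem := h4 ⟨t, ht, rfl⟩
    have hcl : e.symm '' closure D' ⊆ closure D := by
      rw [e.symm.image_closure]
      apply closure_mono
      rintro z ⟨y2, hy2, rfl⟩
      exact hy2
    exact hcl ⟨φ' t, hmem, rfl⟩
  · rintro y ⟨t, ht, rfl⟩
    exact h5 ⟨t, ht, rfl⟩

lemma main_homeo_subtype {X : Type*} [TopologicalSpace X] {W : Set X} (hW : IsOpen W)
    (e : ↥W ≃ₜ Plane) (D : Set X) (hDopen : IsOpen D) (a : X) (haW : a ∈ W)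
    (hacl : a ∈ closure D) (haD : a ∉ D)
    (hlac : ∀ U ∈ nhds a, ∃ V ∈ nhds a, V ⊆ U ∧
      ∀ p ∈ V ∩ D, ∀ q ∈ V ∩ D, ∃ g : ℝ → X, ContinuousOn g (Icc 0 1) ∧
        g 0 = p ∧ g 1 = q ∧ g '' Icc 0 1 ⊆ U ∩ D) :
    ∃ φ : ℝ → X, ContinuousOn φ (Icc 0 1) ∧ InjOn φ (Icc 0 1) ∧
      φ 1 = a ∧ φ '' Icc 0 1 ⊆ closure D ∧ φ '' Ico 0 1 ⊆ D := by
  classical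
  set D' : Set ↥W := Subtype.val ⁻¹' D with hD'
  have hD'open : IsOpen D' := hDopen.preimage continuous_subtype_val
  set a' : ↥W := ⟨a, haW⟩ with ha'
  have hnhds : ∀ N : Set ↥W, N ∈ nhds a' → ∃ M ∈ nhds a, Subtype.val ⁻¹' M ⊆ N := by
    intro N hN
    rw [nhds_subtype] at hN
    obtain ⟨M, hM, hMsub⟩ := hN
    exact ⟨M, hM, hMsub⟩
  have hval_nhds : ∀ M : Set X, M ∈ nhds a → Subtype.val ⁻¹' M ∈ nhds a' := by
    intro M hM
    rw [nhds_subtype]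
    exact ⟨M, hM, subset_rfl⟩
  have hacl' : a' ∈ closure D' := by
    rw [mem_closure_iff_nhds]
    intro N hN
    obtain ⟨M, hM, hMsub⟩ := hnhds N hN
    have : ((M ∩ W) ∩ D).Nonempty := mem_closure_iff_nhds.1 hacl _
      (Filter.inter_mem hM (hW.mem_nhds haW))
    obtain ⟨z, ⟨hzM, hzW⟩, hzD⟩ := this
    exact ⟨⟨z, hzW⟩, hMsub hzM, hzD⟩
  have haD' : a' ∉ D' := haD
  have hlac' : ∀ U' ∈ nhds a', ∃ V' ∈ nhds a', V' ⊆ U' ∧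
      ∀ p ∈ V' ∩ D', ∀ q ∈ V' ∩ D', ∃ g : ℝ → ↥W, ContinuousOn g (Icc 0 1) ∧
        g 0 = p ∧ g 1 = q ∧ g '' Icc 0 1 ⊆ U' ∩ D' := by
    intro U' hU'
    obtain ⟨M, hM, hMsub⟩ := hnhds U' hU'
    obtain ⟨V, hV, hVsub, hjoin⟩ := hlac (M ∩ W) (Filter.inter_mem hM (hW.mem_nhds haW))
    refine ⟨Subtype.val ⁻¹' V, hval_nhds V hV, ?_, ?_⟩
    · intro y hy
      exact hMsub (hVsub hy).1
    · rintro p ⟨hpV, hpD⟩ q ⟨hqV, hqD⟩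
      obtain ⟨g, hgc, hg0, hg1, hgim⟩ := hjoin _ ⟨hpV, hpD⟩ _ ⟨hqV, hqD⟩
      set cl : ℝ → ℝ := fun t => max 0 (min t 1) with hcl
      have hclid : ∀ t ∈ Icc (0:ℝ) 1, cl t = t := by
        intro t ht
        rw [hcl]
        simp only [min_eq_left ht.2, max_eq_right ht.1]
      have hclmem : ∀ t : ℝ, cl t ∈ Icc (0:ℝ) 1 := by
        intro t
        constructor
        · exact le_max_left 0 _
        · rw [hcl]
          simp only [max_le_iff]
          exact ⟨zero_le_one, min_le_right t 1⟩
      have hgW : ∀ t : ℝ, g (cl t) ∈ W := fun t => (hgim ⟨cl t, hclmem t, rfl⟩).1.2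
      have hclc : Continuous cl := by fun_prop
      have hc1 : ContinuousOn (fun t => g (cl t)) (Icc 0 1) := by
        apply hgc.comp hclc.continuousOn
        intro t ht
        rw [hclid t ht]
        exact ht
      refine ⟨fun t => ⟨g (cl t), hgW t⟩, ?_, ?_, ?_, ?_⟩
      · exact Topology.IsEmbedding.subtypeVal.continuousOn_iff.2 hc1
      · have h0 : cl 0 = 0 := hclid 0 ⟨le_rfl, zero_le_one⟩
        apply Subtype.ext
        show g (cl 0) = (p : X)
        rw [h0, hg0]
      · have h1' : cl 1 = 1 := hclid 1 ⟨zero_le_one, le_rfl⟩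
        apply Subtype.ext
        show g (cl 1) = (q : X)
        rw [h1', hg1]
      · rintro y ⟨t, ht, rfl⟩
        have hmem := hgim ⟨cl t, hclmem t, rfl⟩
        exact ⟨hMsub hmem.1.1, hmem.2⟩
  obtain ⟨φ', h1, h2, h3, h4, h5⟩ := main_homeo e D' hD'open a' hacl' haD' hlac'
  refine ⟨fun t => (φ' t : X), continuous_subtype_val.comp_continuousOn h1, ?_,
    by show ((φ' 1 : ↥W) : X) = a; rw [h3], ?_, ?_⟩
  · intro t1 ht1 t2 ht2 heq
    exact h2 ht1 ht2 (Subtype.ext heq)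
  · rintro y ⟨t, ht, rfl⟩
    have hmem := h4 ⟨t, ht, rfl⟩
    have hval : Subtype.val '' closure D' ⊆ closure D := by
      refine (image_closure_subset_closure_image continuous_subtype_val).trans ?_
      apply closure_mono
      rintro z ⟨y2, hy2, rfl⟩
      exact hy2
    exact hval ⟨φ' t, hmem, rfl⟩
  · rintro y ⟨t, ht, rfl⟩
    exact h5 ⟨t, ht, rfl⟩

end Transfer

theorem stmt_4 {X : Type*} [TopologicalSpace X]
    (hX : Nonempty (X ≃ₜ Plane) ∨ Nonempty (X ≃ₜ Sph))
    (D : Set X) (hDopen : IsOpen D) (hDne : D.Nonempty)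
    (a : X) (ha : a ∈ frontier D)
    (hlac : ∀ U ∈ nhds a, ∃ V ∈ nhds a, V ⊆ U ∧
      ∀ p ∈ V ∩ D, ∀ q ∈ V ∩ D, ∃ g : ℝ → X, ContinuousOn g (Icc 0 1) ∧
        g 0 = p ∧ g 1 = q ∧ g '' Icc 0 1 ⊆ U ∩ D) :
    ∃ φ : ℝ → X, ContinuousOn φ (Icc 0 1) ∧ InjOn φ (Icc 0 1) ∧
      φ 1 = a ∧ φ '' Icc 0 1 ⊆ closure D ∧ φ '' Ico 0 1 ⊆ D := by
  rw [hDopen.frontier_eq] at ha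
  obtain ⟨hacl, haD⟩ := ha
  rcases hX with ⟨⟨e⟩⟩ | ⟨⟨e⟩⟩
  · exact main_homeo e D hDopen a hacl haD hlac
  · -- sphere case: remove the antipode of `e a` and use stereographic projection
    haveI : Fact (Module.finrank ℝ (EuclideanSpace ℝ (Fin 3)) = 2 + 1) :=
      ⟨by simp [finrank_euclideanSpace]⟩
    set v : Sph := ⟨-(e a : EuclideanSpace ℝ (Fin 3)), by
      have := (e a).2
      rw [mem_sphere_zero_iff_norm] at this ⊢
      rwa [norm_neg]⟩ with hv
    have hva : v ≠ e a := by
      intro h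
      have h2 : -(e a : EuclideanSpace ℝ (Fin 3)) = (e a : EuclideanSpace ℝ (Fin 3)) :=
        congrArg Subtype.val h
      have h3 : (e a : EuclideanSpace ℝ (Fin 3)) = 0 := by
        have h5 : (e a : EuclideanSpace ℝ (Fin 3)) + (e a : EuclideanSpace ℝ (Fin 3)) = 0 := by
          nth_rewrite 1 [← h2]
          exact neg_add_cancel _
        have h6 : (2:ℝ) • (e a : EuclideanSpace ℝ (Fin 3)) = 0 := by
          rw [two_smul]
          exact h5
        rcases smul_eq_zero.1 h6 with h | h
        · norm_num at h
        · exact h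
      have h4 := (e a).2
      rw [mem_sphere_zero_iff_norm, h3] at h4
      simp at h4
    set W : Set X := e ⁻¹' ({v}ᶜ) with hW
    have hWopen : IsOpen W := (isClosed_singleton.isOpen_compl).preimage e.continuous
    have haW : a ∈ W := by
      rw [hW, mem_preimage, mem_compl_singleton_iff]
      exact fun h => hva h.symm
    -- W is homeomorphic to the plane
    have himg : e '' W = ({v}ᶜ : Set Sph) := by
      rw [hW]
      exact Set.image_preimage_eq _ e.surjective
    set F := stereographic' 2 v with hF
    have hFsrc : F.source = ({v}ᶜ : Set Sph) := stereographic'_source v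
    have hFtgt : F.target = (univ : Set Plane) := stereographic'_target v
    have eW : ↥W ≃ₜ Plane :=
      ((e.image W).trans (Homeomorph.setCongr himg)).trans
        (((Homeomorph.setCongr hFsrc.symm).trans F.toHomeomorphSourceTarget).trans
          ((Homeomorph.setCongr hFtgt).trans (Homeomorph.Set.univ Plane)))
    exact main_homeo_subtype hWopen eW D hDopen a haW hacl haD hlac
end

section
/- Let V₁, …, Vₙ be finitely many closed subsets of ℝ², each homeomorphic to the closed disk, with ⋃ᵢ int Vᵢ connected, and let W be the unbounded component of ℝ² \ ⋃ᵢ Vᵢ. Then every point of ∂(ℝ² \ W) is accessible from the interior of ℝ² \ W. -/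
open Metric Set

/-- A point `x` is accessible from a set `E` if there is a continuous injective map
`φ : [0,1] → ℝ²` with `φ 1 = x` and `φ([0,1)) ⊆ E`. -/
def Accessible (E : Set Plane) (x : Plane) : Prop :=
  ∃ φ : ℝ → Plane, ContinuousOn φ (Icc 0 1) ∧ InjOn φ (Icc 0 1) ∧
    φ 1 = x ∧ φ '' Ico 0 1 ⊆ E

noncomputable section

local notation "π" => Real.pi

/-- Winding number of a loop `γ` (on `[0,1]`) around `0`. -/
def HasWinding (γ : ℝ → ℂ) (k : ℤ) : Prop :=
  ∃ L : ℝ → ℂ, ContinuousOn L (Icc 0 1) ∧ (∀ t ∈ Icc (0:ℝ) 1, Complex.exp (L t) = γ t) ∧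
    L 1 - L 0 = k * (2 * π * Complex.I)

lemma norm_int_mul_two_pi_I (m : ℤ) : ‖(m : ℂ) * (2 * π * Complex.I)‖ = |(m:ℝ)| * (2 * π) := by
  rw [norm_mul, norm_mul, norm_mul, Complex.norm_I, Complex.norm_intCast, Complex.norm_real]
  simp [abs_of_nonneg Real.pi_pos.le, Real.norm_eq_abs]

/-- A continuous function on `[a,b]` taking values in `2πiℤ` has equal endpoint values. -/
lemma eq_of_continuousOn_int_values {f : ℝ → ℂ} {a b : ℝ} (hab : a ≤ b)
    (hf : ContinuousOn f (Icc a b))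
    (hint : ∀ t ∈ Icc a b, ∃ k : ℤ, f t = k * (2 * π * Complex.I)) : f b = f a := by
  by_contra hne
  obtain ⟨ka, hka⟩ := hint a (by simp [hab])
  have hg : ContinuousOn (fun t => ‖f t - f a‖) (Icc a b) := (hf.sub continuousOn_const).norm
  have key : ∀ t ∈ Icc a b, ∃ m : ℤ, f t - f a = m * (2 * π * Complex.I) := by
    intro t ht
    obtain ⟨kt, hkt⟩ := hint t ht
    refine ⟨kt - ka, ?_⟩
    rw [hka, hkt, ← sub_mul]
    push_cast
    ring
  have hmem : π ∈ Icc ((fun t => ‖f t - f a‖) a) ((fun t => ‖f t - f a‖) b) := by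
    constructor
    · simpa using Real.pi_pos.le
    · obtain ⟨m, hm⟩ := key b (by simp [hab])
      show π ≤ ‖f b - f a‖
      rw [hm, norm_int_mul_two_pi_I]
      have hm0 : m ≠ 0 := by
        rintro rfl
        simp only [Int.cast_zero, zero_mul] at hm
        exact hne (by rwa [sub_eq_zero] at hm)
      have : (1:ℝ) ≤ |(m:ℝ)| := by exact_mod_cast Int.one_le_abs hm0
      nlinarith [Real.pi_pos]
  obtain ⟨t, ht, hft⟩ := intermediate_value_Icc hab hg hmem
  obtain ⟨m, hm⟩ := key t ht
  simp only [hm, norm_int_mul_two_pi_I] at hft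
  rcases eq_or_ne m 0 with rfl | hm0
  · simp at hft; exact Real.pi_pos.ne hft
  · have : (1:ℝ) ≤ |(m:ℝ)| := by exact_mod_cast Int.one_le_abs hm0
    nlinarith [Real.pi_pos]

lemma two_pi_I_ne_zero : (2 * (π:ℂ) * Complex.I) ≠ 0 := by
  simp [Real.pi_ne_zero, Complex.I_ne_zero, Complex.ofReal_ne_zero]

lemma HasWinding.unique {γ : ℝ → ℂ} {k m : ℤ} (h1 : HasWinding γ k) (h2 : HasWinding γ m) :
    k = m := by
  obtain ⟨L, hLc, hLe, hLk⟩ := h1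
  obtain ⟨M, hMc, hMe, hMm⟩ := h2
  have hD : ∀ t ∈ Icc (0:ℝ) 1, ∃ j : ℤ, L t - M t = j * (2 * π * Complex.I) := by
    intro t ht
    have : Complex.exp (L t - M t) = 1 := by
      rw [Complex.exp_sub, hLe t ht, hMe t ht, div_self]
      rw [← hMe t ht]; exact Complex.exp_ne_zero _
    exact Complex.exp_eq_one_iff.mp this
  have h := eq_of_continuousOn_int_values zero_le_one (hLc.sub hMc) hD
  have h2 : (k:ℂ) * (2 * π * Complex.I) = m * (2 * π * Complex.I) := by
    rw [← hLk, ← hMm]; simp only [Pi.sub_apply] at h; linear_combination h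
  exact_mod_cast mul_right_cancel₀ two_pi_I_ne_zero h2

lemma hasWinding_const {c : ℂ} (hc : c ≠ 0) : HasWinding (fun _ => c) 0 := by
  have : c ∈ Set.range Complex.exp := by rw [Complex.range_exp]; simpa using hc
  obtain ⟨l, hl⟩ := this
  exact ⟨fun _ => l, continuousOn_const, fun t _ => hl, by simp⟩

/-- Dog-on-a-leash: loops uniformly closer than the leash have equal winding. -/
lemma HasWinding.of_close {γ δ : ℝ → ℂ} {k : ℤ} (hδ : HasWinding δ k)
    (hγc : ContinuousOn γ (Icc 0 1)) (hγloop : γ 1 = γ 0)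
    (hclose : ∀ t ∈ Icc (0:ℝ) 1, ‖γ t - δ t‖ < ‖δ t‖) : HasWinding γ k := by
  obtain ⟨L, hLc, hLe, hLk⟩ := hδ
  have hδne : ∀ t ∈ Icc (0:ℝ) 1, δ t ≠ 0 := fun t ht => by
    rw [← hLe t ht]; exact Complex.exp_ne_zero _
  have hδc : ContinuousOn δ (Icc 0 1) :=
    (Complex.continuous_exp.comp_continuousOn hLc).congr (fun t ht => (hLe t ht).symm)
  have hγne : ∀ t ∈ Icc (0:ℝ) 1, γ t ≠ 0 := by
    intro t ht h0
    have := hclose t ht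
    rw [h0, zero_sub, norm_neg] at this
    exact lt_irrefl _ this
  have hq : ∀ t ∈ Icc (0:ℝ) 1, γ t / δ t ∈ Complex.slitPlane := by
    intro t ht
    rw [Complex.mem_slitPlane_iff]
    left
    have h1 : ‖γ t / δ t - 1‖ < 1 := by
      rw [div_sub_one (hδne t ht), norm_div]
      rw [div_lt_one (norm_pos_iff.mpr (hδne t ht))]
      exact hclose t ht
    have h2 : |(γ t / δ t - 1).re| ≤ ‖γ t / δ t - 1‖ := by
      exact Complex.abs_re_le_norm _
    have h3 : (γ t / δ t).re - 1 = (γ t / δ t - 1).re := by simp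
    nlinarith [(abs_lt.mp (h2.trans_lt h1)).1]
  have hδloop : δ 1 = δ 0 := by
    rw [← hLe 1 (by norm_num), ← hLe 0 (by norm_num)]
    rw [sub_eq_iff_eq_add] at hLk
    rw [hLk, Complex.exp_add, Complex.exp_int_mul_two_pi_mul_I, one_mul]
  refine ⟨fun t => L t + Complex.log (γ t / δ t),
    hLc.add ((hγc.div hδc hδne).clog hq), ?_, ?_⟩
  · intro t ht
    rw [Complex.exp_add, hLe t ht, Complex.exp_log (div_ne_zero (hγne t ht) (hδne t ht))]
    field_simp [hδne t ht]
  · show L 1 + Complex.log (γ 1 / δ 1) - (L 0 + Complex.log (γ 0 / δ 0)) = _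
    rw [hγloop, hδloop]
    linear_combination hLk


/-- Every nonvanishing continuous function on `[0,1]` has a continuous logarithm. -/
lemma exists_lift {γ : ℝ → ℂ} (hγc : ContinuousOn γ (Icc 0 1))
    (hγne : ∀ t ∈ Icc (0:ℝ) 1, γ t ≠ 0) :
    ∃ L : ℝ → ℂ, ContinuousOn L (Icc 0 1) ∧ ∀ t ∈ Icc (0:ℝ) 1, Complex.exp (L t) = γ t := by
  -- minimum of ‖γ‖
  obtain ⟨t₀, ht₀, hmin⟩ := isCompact_Icc.exists_isMinOn (by norm_num : (Icc (0:ℝ) 1).Nonempty)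
    hγc.norm
  set c : ℝ := ‖γ t₀‖ with hc
  have hcpos : 0 < c := norm_pos_iff.mpr (hγne t₀ ht₀)
  have hcle : ∀ t ∈ Icc (0:ℝ) 1, c ≤ ‖γ t‖ := fun t ht => hmin ht
  -- uniform continuity
  have huc := (isCompact_Icc.uniformContinuousOn_of_continuous hγc)
  rw [Metric.uniformContinuousOn_iff] at huc
  obtain ⟨δ, hδpos, hδ⟩ := huc c hcpos
  obtain ⟨N, hNpos0, hN⟩ : ∃ N : ℕ, 0 < N ∧ 1/(N:ℝ) < δ := by
    obtain ⟨n, hn⟩ := exists_nat_one_div_lt hδpos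
    exact ⟨n+1, Nat.succ_pos n, by exact_mod_cast hn⟩
  have hNpos : 0 < (N:ℝ) := by exact_mod_cast hNpos0
  -- the subdivision points
  have hmem : ∀ (j : ℕ), j ≤ N → ∀ t ∈ Icc (0:ℝ) 1, min t ((j:ℝ)/N) ∈ Icc (0:ℝ) 1 := by
    intro j hj t ht
    constructor
    · exact le_min ht.1 (by positivity)
    · exact min_le_of_left_le ht.2
  have hgap : ∀ (j : ℕ), ∀ t : ℝ, |min t (((j:ℝ)+1)/N) - min t ((j:ℝ)/N)| ≤ 1/N := by
    intro j t
    have h1 : (j:ℝ)/N ≤ ((j:ℝ)+1)/N := by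
      apply (div_le_div_iff_of_pos_right hNpos).mpr
      linarith
    rcases le_total t ((j:ℝ)/N) with h | h
    · rw [min_eq_left h, min_eq_left (h.trans h1)]
      simp only [sub_self, abs_zero]
      positivity
    · rw [min_eq_right h]
      rw [abs_le]
      constructor
      · have : (j:ℝ)/N ≤ min t (((j:ℝ)+1)/N) := le_min h h1
        have h2 : (0:ℝ) ≤ 1/N := by positivity
        linarith
      · have : min t (((j:ℝ)+1)/N) ≤ ((j:ℝ)+1)/N := min_le_right _ _
        have h3 : ((j:ℝ)+1)/N - (j:ℝ)/N = 1/N := by field_simp; ring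
        linarith
  -- the quotient terms
  set q : ℕ → ℝ → ℂ := fun j t => γ (min t (((j:ℝ)+1)/N)) / γ (min t ((j:ℝ)/N)) with hqdef
  have hqne : ∀ (j : ℕ), j + 1 ≤ N → ∀ t ∈ Icc (0:ℝ) 1, q j t ≠ 0 := by
    intro j hj t ht
    have h1' := hmem (j+1) hj t ht
    push_cast at h1'
    exact div_ne_zero (hγne _ h1') (hγne _ (hmem j (by omega) t ht))
  have hqclose : ∀ (j : ℕ), j + 1 ≤ N → ∀ t ∈ Icc (0:ℝ) 1, ‖q j t - 1‖ < 1 := by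
    intro j hj t ht
    have hb := hγne _ (hmem j (by omega) t ht)
    rw [hqdef]
    simp only
    rw [div_sub_one hb, norm_div, div_lt_one (norm_pos_iff.mpr hb)]
    have hd : dist (min t (((j:ℝ)+1)/N)) (min t ((j:ℝ)/N)) < δ := by
      rw [Real.dist_eq]
      exact lt_of_le_of_lt (hgap j t) hN
    have h1' := hmem (j+1) hj t ht
    push_cast at h1'
    have := hδ _ h1' _ (hmem j (by omega) t ht) hd
    rw [Complex.dist_eq] at this
    calc ‖γ (min t (((j:ℝ)+1)/N)) - γ (min t ((j:ℝ)/N))‖ < c := this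
      _ ≤ ‖γ (min t ((j:ℝ)/N))‖ := hcle _ (hmem j (by omega) t ht)
  have hqslit : ∀ (j : ℕ), j + 1 ≤ N → ∀ t ∈ Icc (0:ℝ) 1, q j t ∈ Complex.slitPlane := by
    intro j hj t ht
    rw [Complex.mem_slitPlane_iff]
    left
    have h1 := hqclose j hj t ht
    have h2 : |(q j t - 1).re| ≤ ‖q j t - 1‖ := by
      exact Complex.abs_re_le_norm _
    have h3 : (q j t).re - 1 = (q j t - 1).re := by simp
    nlinarith [(abs_lt.mp (h2.trans_lt h1)).1]
  -- starting value
  obtain ⟨l₀, hl₀⟩ : ∃ l₀, Complex.exp l₀ = γ 0 := by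
    have : γ 0 ∈ Set.range Complex.exp := by
      rw [Complex.range_exp]; simpa using hγne 0 (by norm_num)
    exact this
  -- the lift
  refine ⟨fun t => l₀ + ∑ j ∈ Finset.range N, Complex.log (q j t), ?_, ?_⟩
  · apply continuousOn_const.add
    apply continuousOn_finset_sum
    intro j hj
    rw [Finset.mem_range] at hj
    have hcont : ContinuousOn (q j) (Icc 0 1) := by
      apply ContinuousOn.div
      · refine hγc.comp (Continuous.continuousOn ?_)
          (fun t ht => by have h1' := hmem (j+1) hj t ht; push_cast at h1'; exact h1')
        exact continuous_id.min continuous_const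
      · refine hγc.comp (Continuous.continuousOn ?_) (fun t ht => hmem j (by omega) t ht)
        exact continuous_id.min continuous_const
      · exact fun t ht => hγne _ (hmem j (by omega) t ht)
    exact hcont.clog (hqslit j hj)
  · intro t ht
    rw [Complex.exp_add, Complex.exp_sum]
    have hprod : ∀ M : ℕ, M ≤ N →
        ∏ j ∈ Finset.range M, Complex.exp (Complex.log (q j t)) = γ (min t ((M:ℝ)/N)) / γ 0 := by
      intro M
      induction M with
      | zero =>
        intro _
        simp only [Finset.range_zero, Finset.prod_empty, Nat.cast_zero, zero_div]
        rw [min_eq_right ht.1, div_self (hγne 0 (by norm_num))]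
      | succ M ih =>
        intro hM
        rw [Finset.prod_range_succ, ih (by omega),
          Complex.exp_log (hqne M hM t ht)]
        rw [hqdef]
        simp only
        have hMne := hγne _ (hmem M (by omega) t ht)
        have h0 := hγne 0 (by norm_num)
        push_cast
        field_simp
    rw [hprod N le_rfl]
    have : min t ((N:ℝ)/N) = t := by
      rw [div_self (by positivity : (N:ℝ) ≠ 0)]
      exact min_eq_left ht.2
    rw [this, hl₀]
    field_simp [hγne 0 (by norm_num)]

lemma winding_exists {γ : ℝ → ℂ} (hγc : ContinuousOn γ (Icc 0 1))
    (hγne : ∀ t ∈ Icc (0:ℝ) 1, γ t ≠ 0) (hloop : γ 1 = γ 0) :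
    ∃ k : ℤ, HasWinding γ k := by
  obtain ⟨L, hLc, hLe⟩ := exists_lift hγc hγne
  have : Complex.exp (L 1) = Complex.exp (L 0) := by
    rw [hLe 1 (by norm_num), hLe 0 (by norm_num), hloop]
  obtain ⟨k, hk⟩ := Complex.exp_eq_exp_iff_exists_int.mp this
  exact ⟨k, L, hLc, hLe, by rw [hk]; ring⟩

/-- Borsuk: an antiperiodic loop has odd winding number. -/
lemma HasWinding.odd_of_antiperiodic {γ : ℝ → ℂ} {k : ℤ}
    (hanti : ∀ s ∈ Icc (0:ℝ) (1/2), γ (s + 1/2) = -γ s)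
    (hk : HasWinding γ k) : Odd k := by
  obtain ⟨L, hLc, hLe, hLk⟩ := hk
  have hmem1 : ∀ s ∈ Icc (0:ℝ) (1/2), s ∈ Icc (0:ℝ) 1 := fun s hs =>
    ⟨hs.1, hs.2.trans (by norm_num)⟩
  have hmem2 : ∀ s ∈ Icc (0:ℝ) (1/2), s + 1/2 ∈ Icc (0:ℝ) 1 := fun s hs =>
    ⟨by linarith [hs.1], by linarith [hs.2]⟩
  set D : ℝ → ℂ := fun s => L (s + 1/2) - L s - π * Complex.I with hD
  have hDint : ∀ s ∈ Icc (0:ℝ) (1/2), ∃ j : ℤ, D s = j * (2 * π * Complex.I) := by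
    intro s hs
    apply Complex.exp_eq_one_iff.mp
    rw [hD]
    simp only
    rw [Complex.exp_sub, Complex.exp_sub, hLe _ (hmem2 s hs), hLe _ (hmem1 s hs),
      hanti s hs, Complex.exp_pi_mul_I]
    have := Complex.exp_ne_zero (L s)
    rw [hLe _ (hmem1 s hs)] at this
    field_simp
  have hDc : ContinuousOn D (Icc 0 (1/2)) := by
    apply ContinuousOn.sub
    apply ContinuousOn.sub
    · exact hLc.comp (continuous_id.add continuous_const).continuousOn
        (fun s hs => hmem2 s hs)
    · exact hLc.mono (fun s hs => hmem1 s hs)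
    · exact continuousOn_const
  have hhalf := eq_of_continuousOn_int_values (by norm_num) hDc hDint
  obtain ⟨m, hm⟩ := hDint 0 (by norm_num)
  have e1 : D (1/2) = L 1 - L (1/2) - π * Complex.I := by rw [hD]; norm_num
  have e0 : D 0 = L (1/2) - L 0 - π * Complex.I := by rw [hD]; norm_num
  rw [hhalf, hm] at e1
  rw [hm] at e0
  have hL1 : L 1 - L 0 = 2 * ((m:ℂ) * (2 * π * Complex.I)) + 2 * (π * Complex.I) := by
    linear_combination -e1 - e0
  have hk2 : (k:ℂ) * (2*π*Complex.I) = (2*(m:ℂ)+1) * (2*π*Complex.I) := by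
    rw [← hLk]; linear_combination hL1
  have hkc : (k:ℂ) = 2*(m:ℂ)+1 := mul_right_cancel₀ two_pi_I_ne_zero hk2
  have : k = 2*m+1 := by exact_mod_cast hkc
  exact ⟨m, by omega⟩

/-- Homotopy invariance of the winding number. -/
lemma winding_homotopy {F : ℝ → ℝ → ℂ} {k m : ℤ}
    (hFc : ContinuousOn (fun p : ℝ × ℝ => F p.1 p.2) (Icc 0 1 ×ˢ Icc 0 1))
    (hFne : ∀ t ∈ Icc (0:ℝ) 1, ∀ s ∈ Icc (0:ℝ) 1, F t s ≠ 0)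
    (hFloop : ∀ t ∈ Icc (0:ℝ) 1, F t 1 = F t 0)
    (h0 : HasWinding (F 0) k) (h1 : HasWinding (F 1) m) : k = m := by
  have hK : IsCompact (Icc (0:ℝ) 1 ×ˢ Icc (0:ℝ) 1) := isCompact_Icc.prod isCompact_Icc
  obtain ⟨p₀, hp₀, hmin⟩ := hK.exists_isMinOn
    ⟨(0,0), Set.mk_mem_prod (by norm_num) (by norm_num)⟩ hFc.norm
  set c : ℝ := ‖F p₀.1 p₀.2‖ with hc
  have hcpos : 0 < c := norm_pos_iff.mpr (hFne _ hp₀.1 _ hp₀.2)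
  have hcle : ∀ t ∈ Icc (0:ℝ) 1, ∀ s ∈ Icc (0:ℝ) 1, c ≤ ‖F t s‖ := fun t ht s hs =>
    hmin (Set.mk_mem_prod ht hs)
  have huc := hK.uniformContinuousOn_of_continuous hFc
  rw [Metric.uniformContinuousOn_iff] at huc
  obtain ⟨δ, hδpos, hδ⟩ := huc c hcpos
  -- continuity of slices
  have hslice : ∀ t ∈ Icc (0:ℝ) 1, ContinuousOn (F t) (Icc 0 1) := by
    intro t ht
    have : ContinuousOn ((fun p : ℝ × ℝ => F p.1 p.2) ∘ (fun s => (t, s))) (Icc 0 1) := by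
      apply hFc.comp (Continuous.continuousOn (Continuous.prodMk_right t))
      intro s hs
      exact Set.mk_mem_prod ht hs
    exact this
  -- one step of the homotopy
  have hstep : ∀ t ∈ Icc (0:ℝ) 1, ∀ t' ∈ Icc (0:ℝ) 1, dist t' t < δ →
      ∀ j : ℤ, HasWinding (F t) j → HasWinding (F t') j := by
    intro t ht t' ht' hd j hj
    apply hj.of_close (hslice t' ht') (hFloop t' ht')
    intro s hs
    have := hδ (t', s) (Set.mk_mem_prod ht' hs) (t, s) (Set.mk_mem_prod ht hs)
      (by rw [Prod.dist_eq]; simp only [dist_self]; exact sup_lt_iff.mpr ⟨hd, hδpos⟩)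
    rw [Complex.dist_eq] at this
    exact lt_of_lt_of_le this (hcle t ht s hs)
  -- subdivision
  obtain ⟨N, hNpos0, hN⟩ : ∃ N : ℕ, 0 < N ∧ 1/(N:ℝ) < δ := by
    obtain ⟨n, hn⟩ := exists_nat_one_div_lt hδpos
    exact ⟨n+1, Nat.succ_pos n, by exact_mod_cast hn⟩
  have hNpos : 0 < (N:ℝ) := by exact_mod_cast hNpos0
  have hmemj : ∀ j : ℕ, j ≤ N → (j:ℝ)/N ∈ Icc (0:ℝ) 1 := by
    intro j hj
    constructor
    · positivity
    · rw [div_le_one hNpos]; exact_mod_cast hj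
  have hind : ∀ j : ℕ, j ≤ N → HasWinding (F ((j:ℝ)/N)) k := by
    intro j
    induction j with
    | zero => intro _; simpa using h0
    | succ j ih =>
      intro hj
      have hstep' := hstep ((j:ℝ)/N) (hmemj j (by omega)) (((j:ℝ)+1)/N)
        (by have := hmemj (j+1) hj; push_cast at this; exact this)
        (by rw [Real.dist_eq]
            have h3 : ((j:ℝ)+1)/N - (j:ℝ)/N = 1/N := by field_simp; ring
            rw [h3, abs_of_pos (by positivity)]
            exact hN)
        k (ih (by omega))
      have : (((j:ℕ)+1:ℕ):ℝ)/N = ((j:ℝ)+1)/N := by push_cast; ring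
      rw [this]
      exact hstep'
  have hNN : ((N:ℝ))/N = 1 := div_self (by positivity)
  have := hind N le_rfl
  rw [hNN] at this
  exact this.unique h1


/-- Key lemma: a point in the image of the open disc under a continuous injection of the
closed disc is not in the closure of an unbounded connected set avoiding the image. -/
lemma key_not_mem_closure {g : ℂ → ℂ} (hg : ContinuousOn g (closedBall 0 1))
    (hinj : Set.InjOn g (closedBall 0 1)) {A : Set ℂ} (hA : IsPreconnected A)
    (hdisj : ∀ p ∈ A, ∀ z ∈ closedBall (0:ℂ) 1, g z ≠ p)
    (hAunb : ∀ R : ℝ, ∃ p ∈ A, R < ‖p‖)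
    {w : ℂ} (hw : ‖w‖ < 1) : g w ∉ closure A := by
  set ρ : ℝ := 1 - ‖w‖ with hρdef
  have hρ : 0 < ρ := by rw [hρdef]; linarith
  -- the circle parametrization
  set es : ℝ → ℂ := fun s => Complex.exp (((2*π*s : ℝ) : ℂ) * Complex.I) with hesdef
  have hes_norm : ∀ s, ‖es s‖ = 1 := fun s => Complex.norm_exp_ofReal_mul_I _
  have hes_ne : ∀ s, es s ≠ 0 := fun s => Complex.exp_ne_zero _
  have hes0 : es 0 = 1 := by simp [hesdef]
  have hes1 : es 1 = 1 := by
    simp only [hesdef]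
    rw [show ((2*π*1 : ℝ) : ℂ) = 2*(π:ℂ) by push_cast; ring]
    exact Complex.exp_two_pi_mul_I
  have hes_anti : ∀ s : ℝ, es (s + 1/2) = -es s := by
    intro s
    simp only [hesdef]
    rw [show ((2*π*(s+1/2) : ℝ) : ℂ) * Complex.I = ((2*π*s : ℝ) : ℂ) * Complex.I
        + (π:ℂ) * Complex.I by push_cast; ring]
    rw [Complex.exp_add, Complex.exp_pi_mul_I]
    ring
  have hes_cont : Continuous es := by
    apply Complex.continuous_exp.comp
    exact (Complex.continuous_ofReal.comp (continuous_const.mul continuous_id)).mul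
      continuous_const
  -- memberships
  have hmemP : ∀ s : ℝ, w + (ρ:ℂ) * es s ∈ closedBall (0:ℂ) 1 := by
    intro s
    rw [mem_closedBall_zero_iff]
    calc ‖w + (ρ:ℂ) * es s‖ ≤ ‖w‖ + ‖(ρ:ℂ) * es s‖ := norm_add_le _ _
      _ = ‖w‖ + ρ := by rw [norm_mul, Complex.norm_real, hes_norm, Real.norm_eq_abs,
            abs_of_pos hρ, mul_one]
      _ = 1 := by rw [hρdef]; ring
  have hmemM : ∀ t s : ℝ, t ∈ Icc (0:ℝ) 1 → w - (t:ℂ) * (ρ:ℂ) * es s ∈ closedBall (0:ℂ) 1 := by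
    intro t s ht
    rw [mem_closedBall_zero_iff]
    calc ‖w - (t:ℂ) * (ρ:ℂ) * es s‖ ≤ ‖w‖ + ‖(t:ℂ) * (ρ:ℂ) * es s‖ := norm_sub_le _ _
      _ = ‖w‖ + t * ρ := by
          rw [norm_mul, norm_mul, Complex.norm_real, Complex.norm_real, hes_norm,
            Real.norm_eq_abs, Real.norm_eq_abs, abs_of_pos hρ, abs_of_nonneg ht.1, mul_one]
      _ ≤ ‖w‖ + ρ := by nlinarith [ht.2, hρ]
      _ = 1 := by rw [hρdef]; ring
  -- the loop around g w
  set Γ : ℝ → ℂ := fun s => g (w + (ρ:ℂ) * es s) with hΓdef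
  have hΓc : ContinuousOn Γ (Icc 0 1) := by
    apply hg.comp (Continuous.continuousOn
      (continuous_const.add (continuous_const.mul hes_cont))) (fun s _ => hmemP s)
  have hΓloop : Γ 1 = Γ 0 := by simp only [hΓdef, hes0, hes1]
  have hwmem : w ∈ closedBall (0:ℂ) 1 := by rw [mem_closedBall_zero_iff]; exact hw.le
  have hΓne : ∀ s : ℝ, Γ s ≠ g w := by
    intro s h
    have := hinj (hmemP s) hwmem h
    apply hes_ne s
    have h2 : (ρ:ℂ) * es s = 0 := by linear_combination this
    rcases mul_eq_zero.mp h2 with h3 | h3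
    · exact absurd h3 (by exact_mod_cast hρ.ne')
    · exact h3
  -- the homotopy to the antiperiodic loop
  set F : ℝ → ℝ → ℂ := fun t s => g (w + (ρ:ℂ) * es s) - g (w - (t:ℂ) * (ρ:ℂ) * es s)
    with hFdef
  have hFc : ContinuousOn (fun p : ℝ × ℝ => F p.1 p.2) (Icc 0 1 ×ˢ Icc 0 1) := by
    apply ContinuousOn.sub
    · exact hg.comp (Continuous.continuousOn
        (continuous_const.add (continuous_const.mul (hes_cont.comp continuous_snd))))
        (fun p hp => hmemP p.2)
    · exact hg.comp (Continuous.continuousOn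
        (continuous_const.sub ((((Complex.continuous_ofReal.comp continuous_fst).mul
          continuous_const)).mul (hes_cont.comp continuous_snd))))
        (fun p hp => hmemM p.1 p.2 hp.1)
  have hFne : ∀ t ∈ Icc (0:ℝ) 1, ∀ s ∈ Icc (0:ℝ) 1, F t s ≠ 0 := by
    intro t ht s hs h0
    rw [hFdef] at h0
    simp only [sub_eq_zero] at h0
    have := hinj (hmemP s) (hmemM t s ht) h0
    have h2 : ((1:ℂ) + t) * ((ρ:ℂ) * es s) = 0 := by linear_combination this
    rcases mul_eq_zero.mp h2 with h3 | h3
    · have : (1:ℝ) + t ≠ 0 := by linarith [ht.1]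
      apply this
      exact_mod_cast h3
    · rcases mul_eq_zero.mp h3 with h4 | h4
      · exact absurd h4 (by exact_mod_cast hρ.ne')
      · exact hes_ne s h4
  have hFloop : ∀ t ∈ Icc (0:ℝ) 1, F t 1 = F t 0 := by
    intro t _
    simp only [hFdef, hes0, hes1]
  -- F 1 is antiperiodic
  have hF1anti : ∀ s ∈ Icc (0:ℝ) (1/2), F 1 (s + 1/2) = -F 1 s := by
    intro s _
    simp only [hFdef, hes_anti s, Complex.ofReal_one, one_mul]
    rw [show w + (ρ:ℂ) * -es s = w - (ρ:ℂ) * es s by ring,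
      show w - (ρ:ℂ) * -es s = w + (ρ:ℂ) * es s by ring]
    ring
  -- windings
  have hF1c : ContinuousOn (F 1) (Icc 0 1) := by
    have : ContinuousOn ((fun p : ℝ × ℝ => F p.1 p.2) ∘ (fun s => ((1:ℝ), s))) (Icc 0 1) := by
      apply hFc.comp (Continuous.continuousOn (Continuous.prodMk_right 1))
      intro s hs
      exact Set.mk_mem_prod (by norm_num) hs
    exact this
  have hF0c : ContinuousOn (F 0) (Icc 0 1) := by
    have : ContinuousOn ((fun p : ℝ × ℝ => F p.1 p.2) ∘ (fun s => ((0:ℝ), s))) (Icc 0 1) := by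
      apply hFc.comp (Continuous.continuousOn (Continuous.prodMk_right 0))
      intro s hs
      exact Set.mk_mem_prod (by norm_num) hs
    exact this
  obtain ⟨k₁, hk₁⟩ := winding_exists hF1c
    (fun s hs => hFne 1 (by norm_num) s hs) (hFloop 1 (by norm_num))
  obtain ⟨n₀, hn₀⟩ := winding_exists hF0c
    (fun s hs => hFne 0 (by norm_num) s hs) (hFloop 0 (by norm_num))
  have hodd : Odd k₁ := hk₁.odd_of_antiperiodic hF1anti
  have heq : n₀ = k₁ := winding_homotopy hFc hFne hFloop hn₀ hk₁
  have hn₀ne : n₀ ≠ 0 := by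
    rw [heq]
    rintro rfl
    exact (Int.not_odd_iff_even.mpr Even.zero) hodd
  -- F 0 = Γ - g w
  have hF0eq : F 0 = fun s => Γ s - g w := by
    funext s
    simp only [hFdef, hΓdef, Complex.ofReal_zero, zero_mul, sub_zero]
  rw [hF0eq] at hn₀
  -- basepoint transport data
  have hΛc : ∀ p : ℂ, ContinuousOn (fun s => Γ s - p) (Icc 0 1) := fun p =>
    hΓc.sub continuousOn_const
  have hΛloop : ∀ p : ℂ, (fun s => Γ s - p) 1 = (fun s => Γ s - p) 0 := fun p => by
    simp only [hΓloop]
  have htrans : ∀ p : ℂ, (∀ s ∈ Icc (0:ℝ) 1, Γ s ≠ p) → ∃ cp > 0, ∀ p' : ℂ,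
      dist p' p < cp → ((∀ s ∈ Icc (0:ℝ) 1, Γ s ≠ p') ∧
        ∀ j : ℤ, HasWinding (fun s => Γ s - p) j → HasWinding (fun s => Γ s - p') j) := by
    intro p hp
    obtain ⟨s₀, hs₀, hmin⟩ := isCompact_Icc.exists_isMinOn (⟨0, by norm_num⟩ :
      (Icc (0:ℝ) 1).Nonempty) ((hΛc p).norm)
    set cp : ℝ := ‖Γ s₀ - p‖ with hcp
    have hcppos : 0 < cp := norm_pos_iff.mpr (sub_ne_zero.mpr (hp s₀ hs₀))
    have hcple : ∀ s ∈ Icc (0:ℝ) 1, cp ≤ ‖Γ s - p‖ := fun s hs => hmin hs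
    refine ⟨cp, hcppos, fun p' hd => ⟨?_, ?_⟩⟩
    · intro s hs h
      rw [dist_eq_norm] at hd
      have h1 := hcple s hs
      have : ‖Γ s - p‖ ≤ ‖p' - p‖ := by rw [← h]
      nlinarith
    · intro j hj
      apply hj.of_close (hΛc p') (hΛloop p')
      intro s hs
      rw [dist_eq_norm] at hd
      calc ‖(Γ s - p') - (Γ s - p)‖ = ‖p' - p‖ := by rw [norm_sub_rev (Γ s - p')]; congr 1; ring
        _ < cp := hd
        _ ≤ ‖Γ s - p‖ := hcple s hs
  -- the two open sets
  set u : Set ℂ := {p | (∀ s ∈ Icc (0:ℝ) 1, Γ s ≠ p) ∧ HasWinding (fun s => Γ s - p) n₀}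
    with hudef
  set v : Set ℂ := {p | (∀ s ∈ Icc (0:ℝ) 1, Γ s ≠ p) ∧
      ∃ j : ℤ, j ≠ n₀ ∧ HasWinding (fun s => Γ s - p) j} with hvdef
  have hu : IsOpen u := by
    rw [Metric.isOpen_iff]
    intro p hp
    obtain ⟨cp, hcppos, hcp⟩ := htrans p hp.1
    exact ⟨cp, hcppos, fun p' hp' => ⟨(hcp p' hp').1, (hcp p' hp').2 n₀ hp.2⟩⟩
  have hv : IsOpen v := by
    rw [Metric.isOpen_iff]
    intro p hp
    obtain ⟨cp, hcppos, hcp⟩ := htrans p hp.1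
    obtain ⟨j, hjne, hj⟩ := hp.2
    exact ⟨cp, hcppos, fun p' hp' => ⟨(hcp p' hp').1, j, hjne, (hcp p' hp').2 j hj⟩⟩
  have hAne : ∀ p ∈ A, ∀ s ∈ Icc (0:ℝ) 1, Γ s ≠ p := fun p hpA s _ =>
    hdisj p hpA _ (hmemP s)
  have hcover : A ⊆ u ∪ v := by
    intro p hpA
    obtain ⟨j, hj⟩ := winding_exists (hΛc p)
      (fun s hs => sub_ne_zero.mpr (hAne p hpA s hs)) (hΛloop p)
    rcases eq_or_ne j n₀ with rfl | hne
    · exact Or.inl ⟨hAne p hpA, hj⟩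
    · exact Or.inr ⟨hAne p hpA, j, hne, hj⟩
  -- a nearby basepoint in A
  intro hcl
  obtain ⟨c₀, hc₀pos, hc₀le⟩ : ∃ c₀ > 0, ∀ s ∈ Icc (0:ℝ) 1, c₀ ≤ ‖Γ s - g w‖ := by
    obtain ⟨s₀, hs₀, hmin⟩ := isCompact_Icc.exists_isMinOn (⟨0, by norm_num⟩ :
      (Icc (0:ℝ) 1).Nonempty) ((hΛc (g w)).norm)
    exact ⟨‖Γ s₀ - g w‖, norm_pos_iff.mpr (sub_ne_zero.mpr (hΓne s₀)),
      fun s hs => hmin hs⟩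
  obtain ⟨p, hpA, hpd⟩ := Metric.mem_closure_iff.mp hcl c₀ hc₀pos
  have hpu : p ∈ u := by
    refine ⟨hAne p hpA, ?_⟩
    apply hn₀.of_close (hΛc p) (hΛloop p)
    intro s hs
    calc ‖(Γ s - p) - (Γ s - g w)‖ = dist (g w) p := by
          rw [dist_eq_norm]; congr 1; ring
      _ < c₀ := hpd
      _ ≤ ‖Γ s - g w‖ := hc₀le s hs
  -- a faraway basepoint in A
  obtain ⟨R, hR⟩ : ∃ R : ℝ, ∀ y ∈ g '' (closedBall (0:ℂ) 1), ‖y‖ ≤ R := by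
    have := ((isCompact_closedBall (0:ℂ) 1).image_of_continuousOn hg).isBounded
    exact isBounded_iff_forall_norm_le.mp this
  obtain ⟨q, hqA, hqR⟩ := hAunb R
  have hqv : q ∈ v := by
    refine ⟨hAne q hqA, 0, Ne.symm hn₀ne, ?_⟩
    have hqne : -q ≠ 0 := by
      intro h
      rw [neg_eq_zero] at h
      rw [h] at hqR
      simp at hqR
      have : (0:ℝ) ≤ R := le_trans (norm_nonneg _) (hR _ ⟨w, hwmem, rfl⟩)
      linarith
    apply (hasWinding_const hqne).of_close (hΛc q) (hΛloop q)
    intro s hs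
    calc ‖(Γ s - q) - (-q)‖ = ‖Γ s‖ := by congr 1; ring
      _ ≤ R := hR _ ⟨_, hmemP s, rfl⟩
      _ < ‖q‖ := hqR
      _ = ‖-q‖ := (norm_neg q).symm
  -- contradiction via connectedness
  obtain ⟨r, hrA, hru, hrv⟩ := hA u v hu hv hcover ⟨p, hpA, hpu⟩ ⟨q, hqA, hqv⟩
  obtain ⟨j, hjne, hj⟩ := hrv.2
  exact hjne (hj.unique hru.2)

end

theorem stmt_7 (n : ℕ) (V : Fin n → Set Plane)
    (hclosed : ∀ i, IsClosed (V i))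
    (hdisk : ∀ i, Nonempty ((V i) ≃ₜ (closedBall (0 : Plane) 1)))
    (hconn : IsConnected (⋃ i, interior (V i)))
    (W : Set Plane)
    (hWcomp : ∃ x ∈ (⋃ i, V i)ᶜ, W = connectedComponentIn (⋃ i, V i)ᶜ x)
    (hWunbounded : ¬ Bornology.IsBounded W) :
    ∀ x ∈ frontier (Wᶜ : Set Plane), Accessible (interior (Wᶜ : Set Plane)) x := by
  intro x hx
  classical
  set U : Set Plane := ⋃ i, V i with hU
  have hUclosed : IsClosed U := isClosed_iUnion_of_finite hclosed
  obtain ⟨x₀, hx₀, hWeq⟩ := hWcomp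
  have hWopen : IsOpen W := by rw [hWeq]; exact hUclosed.isOpen_compl.connectedComponentIn
  have hWsub : W ⊆ Uᶜ := by rw [hWeq]; exact connectedComponentIn_subset _ _
  have hWconn : IsPreconnected W := by rw [hWeq]; exact isPreconnected_connectedComponentIn
  rw [frontier_compl] at hx
  have hxcl : x ∈ closure W := frontier_subset_closure hx
  have hxnW : x ∉ W := by
    intro h
    rw [frontier, hWopen.interior_eq] at hx
    exact hx.2 h
  -- `x` belongs to the union of the disks
  have hxU : x ∈ U := by
    by_contra hxU
    have hxO : x ∈ Uᶜ := hxU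
    have hopen : IsOpen (connectedComponentIn Uᶜ x) := hUclosed.isOpen_compl.connectedComponentIn
    have hxmem : x ∈ connectedComponentIn Uᶜ x := mem_connectedComponentIn hxO
    obtain ⟨y, hy1, hy2⟩ := _root_.mem_closure_iff.mp hxcl _ hopen hxmem
    have h1 : connectedComponentIn Uᶜ x = connectedComponentIn Uᶜ y :=
      connectedComponentIn_eq hy1
    have h2 : connectedComponentIn Uᶜ x₀ = connectedComponentIn Uᶜ y :=
      connectedComponentIn_eq (by rw [← hWeq]; exact hy2)
    apply hxnW
    rw [hWeq, h2, ← h1]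
    exact hxmem
  obtain ⟨i, hxi⟩ := mem_iUnion.mp hxU
  obtain ⟨e⟩ := hdisk i
  set ψ := Complex.orthonormalBasisOneI.repr with hψ
  have hmemψ : ∀ z : ℂ, z ∈ closedBall (0:ℂ) 1 → ψ z ∈ closedBall (0:Plane) 1 := by
    intro z hz
    rw [mem_closedBall_zero_iff] at hz ⊢
    rw [ψ.norm_map]
    exact hz
  -- the conjugated embedding of the closed disc
  set g : ℂ → ℂ := fun z => if h : z ∈ closedBall (0:ℂ) 1 then
      ψ.symm ((e.symm ⟨ψ z, hmemψ z h⟩ : V i) : Plane) else 0 with hgdef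
  have hgeq : ∀ z (hz : z ∈ closedBall (0:ℂ) 1),
      g z = ψ.symm ((e.symm ⟨ψ z, hmemψ z hz⟩ : V i) : Plane) := by
    intro z hz
    simp only [hgdef, dif_pos hz]
  have hgc : ContinuousOn g (closedBall (0:ℂ) 1) := by
    rw [continuousOn_iff_continuous_restrict]
    have hres : (closedBall (0:ℂ) 1).domRestrict g = fun z : closedBall (0:ℂ) 1 =>
        ψ.symm ((e.symm ⟨ψ z, hmemψ z z.2⟩ : V i) : Plane) :=
      funext fun z => hgeq z z.2
    rw [hres]
    exact ψ.symm.continuous.comp (continuous_subtype_val.comp (e.symm.continuous.comp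
      (Continuous.subtype_mk (ψ.continuous.comp continuous_subtype_val) _)))
  have hginj : InjOn g (closedBall (0:ℂ) 1) := by
    intro a ha b hb hab
    rw [hgeq a ha, hgeq b hb] at hab
    have h1 := ψ.symm.injective hab
    have h2 := e.symm.injective (Subtype.coe_injective h1)
    have h3 : ψ a = ψ b := congrArg Subtype.val h2
    exact ψ.injective h3
  have hgim : ∀ z ∈ closedBall (0:ℂ) 1, ψ (g z) ∈ V i := by
    intro z hz
    rw [hgeq z hz, ψ.apply_symm_apply]
    exact (e.symm ⟨ψ z, hmemψ z hz⟩).2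
  -- the image of W in ℂ
  set A : Set ℂ := ⇑ψ.symm '' W with hA
  have hAconn : IsPreconnected A := hWconn.image _ ψ.symm.continuous.continuousOn
  have hVW : ∀ y ∈ V i, y ∉ W := by
    intro y hy hyW
    exact (hWsub hyW) (mem_iUnion.mpr ⟨i, hy⟩)
  have hAdisj : ∀ p ∈ A, ∀ z ∈ closedBall (0:ℂ) 1, g z ≠ p := by
    rintro p ⟨y, hyW, rfl⟩ z hz hgz
    have : ψ (g z) = y := by rw [hgz, ψ.apply_symm_apply]
    exact hVW _ (this ▸ hgim z hz) hyW
  have hAunb : ∀ R : ℝ, ∃ p ∈ A, R < ‖p‖ := by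
    intro R
    by_contra hcon
    push_neg at hcon
    apply hWunbounded
    rw [isBounded_iff_forall_norm_le]
    refine ⟨R, fun y hy => ?_⟩
    have := hcon (ψ.symm y) ⟨y, hy, rfl⟩
    rwa [ψ.symm.norm_map] at this
  -- closure of A
  have hcoe : ⇑(ψ.symm.toHomeomorph) = ⇑ψ.symm := rfl
  have hclA : ⇑ψ.symm '' closure W = closure A := by
    rw [← hcoe, Homeomorph.image_closure, hcoe]
  -- the disc coordinate of x
  set w₁ : ℂ := ψ.symm ((e ⟨x, hxi⟩ : closedBall (0:Plane) 1) : Plane) with hw₁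
  have hw₁le : ‖w₁‖ ≤ 1 := by
    rw [hw₁, ψ.symm.norm_map]
    exact mem_closedBall_zero_iff.mp (e ⟨x, hxi⟩).2
  have hw₁cb : w₁ ∈ closedBall (0:ℂ) 1 := mem_closedBall_zero_iff.mpr hw₁le
  have hgw₁ : g w₁ = ψ.symm x := by
    rw [hgeq w₁ hw₁cb]
    have h2 : (⟨ψ w₁, hmemψ w₁ hw₁cb⟩ : closedBall (0:Plane) 1) = e ⟨x, hxi⟩ := by
      apply Subtype.ext
      show ψ w₁ = _
      rw [hw₁, ψ.apply_symm_apply]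
    rw [h2, e.symm_apply_apply]
  -- x's coordinate is on the unit circle
  have hxclA : ψ.symm x ∈ closure A := hclA ▸ mem_image_of_mem _ hxcl
  have hw₁eq : ‖w₁‖ = 1 := by
    rcases lt_or_eq_of_le hw₁le with hlt | heq
    · exact absurd hxclA (hgw₁ ▸ key_not_mem_closure hgc hginj hAconn hAdisj hAunb hlt)
    · exact heq
  have hw₁ne : w₁ ≠ 0 := by
    intro h
    rw [h, norm_zero] at hw₁eq
    norm_num at hw₁eq
  -- the radial access path
  refine ⟨fun t => ψ (g ((t:ℂ) * w₁)), ?_, ?_, ?_, ?_⟩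
  · apply ψ.continuous.comp_continuousOn
    apply hgc.comp ((Complex.continuous_ofReal.mul continuous_const).continuousOn)
    intro t ht
    rw [mem_closedBall_zero_iff]; show ‖(t:ℂ) * w₁‖ ≤ 1; rw [norm_mul, Complex.norm_real, Real.norm_eq_abs,
      abs_of_nonneg ht.1, hw₁eq, mul_one]
    exact ht.2
  · intro a ha b hb hab
    have h1 := ψ.injective hab
    have hma : (a:ℂ) * w₁ ∈ closedBall (0:ℂ) 1 := by
      rw [mem_closedBall_zero_iff, norm_mul, Complex.norm_real, Real.norm_eq_abs,
        abs_of_nonneg ha.1, hw₁eq, mul_one]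
      exact ha.2
    have hmb : (b:ℂ) * w₁ ∈ closedBall (0:ℂ) 1 := by
      rw [mem_closedBall_zero_iff, norm_mul, Complex.norm_real, Real.norm_eq_abs,
        abs_of_nonneg hb.1, hw₁eq, mul_one]
      exact hb.2
    have h2 := hginj hma hmb h1
    have h3 : (a:ℂ) = b := mul_right_cancel₀ hw₁ne h2
    exact_mod_cast h3
  · show ψ (g (((1:ℝ):ℂ) * w₁)) = x
    rw [Complex.ofReal_one, one_mul, hgw₁, ψ.apply_symm_apply]
  · rintro _ ⟨t, ht, rfl⟩
    have hnorm : ‖(t:ℂ) * w₁‖ < 1 := by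
      rw [norm_mul, Complex.norm_real, Real.norm_eq_abs, abs_of_nonneg ht.1, hw₁eq, mul_one]
      exact ht.2
    have hkey := key_not_mem_closure hgc hginj hAconn hAdisj hAunb hnorm
    rw [interior_compl]
    intro hmem
    apply hkey
    rw [← hclA]
    exact ⟨ψ (g ((t:ℂ) * w₁)), hmem, ψ.symm_apply_apply _⟩
end
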